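/- arXiv:2511.03495 — 5 statements merged into one kernel-verified Lean document; each statement's English description precedes it below -/
import Mathlib

section
/- Let I be a finite index set, C a symmetric positive semidefinite matrix indexed by I, X ⊆ I a subset, and k > 0 a real number such that k · ‖C‖ ≤ 1, where ‖C‖ is the operator norm of C on Euclidean ℝ^I (its largest eigenvalue). Then for every φ ∈ ℝ^I, ∫ exp( −(k/2) · ∑_{x∈X} (φ_x + ζ_x)² ) dμ_C(ζ) ≤ exp( −(k/4) · ∑_{x∈X} φ_x² ). -/
/-!
Completing the square coordinatewise, `-(k/2)(a + b)² ≤ -(3k/8)a² - (k/2)ab`, bounds the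
integrand by `exp (c + ⟪w, ζ⟫)` with `c = -(3k/8) ∑_X φ²` and `w = -(k/2) 1_X φ`. Writing
`μ_C` as the image of the standard product Gaussian under `√C`, its moment generating function
is `∫ exp ⟪w, ζ⟫ dμ_C = exp (⟪w, C w⟫ / 2)`, and `k ‖C‖ ≤ 1` gives `⟪w, C w⟫ / 2 ≤ (k/8) ∑_X φ²`;
finally `-3k/8 + k/8 = -k/4`.
-/

open MeasureTheory

/-- The centered Gaussian measure on `I → ℝ` with covariance matrix `C`: the pushforward
of the standard Gaussian product measure under the positive semidefinite square root of `C`. -/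
noncomputable def gaussianMeasure {I : Type*} [Fintype I] [DecidableEq I]
    {C : Matrix I I ℝ} (hC : C.PosSemidef) : Measure (I → ℝ) :=
  Measure.map (fun ζ => Matrix.mulVec ((hC.1.eigenvectorUnitary : Matrix I I ℝ) * Matrix.diagonal
      ((RCLike.ofReal : ℝ → ℝ) ∘ Real.sqrt ∘ hC.1.eigenvalues) *
      (star hC.1.eigenvectorUnitary : Matrix I I ℝ)) ζ)
    (Measure.pi fun _ => ProbabilityTheory.gaussianReal 0 1)

open ProbabilityTheory Matrix

section PiGaussianReal

variable {I : Type*} [Fintype I]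

lemma integrable_exp_dotProduct_pi_gaussianReal (v : I → ℝ) :
    Integrable (fun η ↦ Real.exp (v ⬝ᵥ η)) (Measure.pi fun _ : I ↦ gaussianReal 0 1) := by
  simpa only [dotProduct, Real.exp_sum] using
    Integrable.fintype_prod (f := fun i t ↦ Real.exp (v i * t))
      fun i ↦ integrable_exp_mul_gaussianReal (v i)

lemma integral_exp_dotProduct_pi_gaussianReal (v : I → ℝ) :
    ∫ η, Real.exp (v ⬝ᵥ η) ∂(Measure.pi fun _ : I ↦ gaussianReal 0 1) =
      Real.exp (v ⬝ᵥ v / 2) := by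
  have hmgf (t : ℝ) : ∫ x, Real.exp (t * x) ∂gaussianReal 0 1 = Real.exp (t ^ 2 / 2) := by
    simpa [mgf] using congrFun (mgf_id_gaussianReal (μ := 0) (v := 1)) t
  simp only [dotProduct, Real.exp_sum, Finset.sum_div]
  rw [integral_fintype_prod_eq_prod (f := fun i t ↦ Real.exp (v i * t))]
  simp only [hmgf, sq]

end PiGaussianReal

lemma measurable_mulVec {I : Type*} [Fintype I] (S : Matrix I I ℝ) :
    Measurable (S *ᵥ · : (I → ℝ) → I → ℝ) :=
  (Matrix.mulVecLin S).continuous_of_finiteDimensional.measurable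

section GaussianMeasure

variable {I : Type*} [Fintype I] [DecidableEq I] {C : Matrix I I ℝ}

lemma gaussianMeasure_eq_map_cfc_sqrt (hC : C.PosSemidef) :
    gaussianMeasure hC =
      (Measure.pi fun _ : I ↦ gaussianReal 0 1).map (cfc Real.sqrt C *ᵥ ·) := by
  rw [hC.1.cfc_eq]
  rfl

lemma Matrix.PosSemidef.cfc_sqrt_mul_self (hC : C.PosSemidef) :
    cfc Real.sqrt C * cfc Real.sqrt C = C := by
  have hC' : IsSelfAdjoint C := hC.1 -- found in the context by the autoparam of `cfc_mul`
  have hspec := (posSemidef_iff_isHermitian_and_spectrum_nonneg.1 hC).2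
  calc cfc Real.sqrt C * cfc Real.sqrt C = cfc (fun x ↦ √x * √x) C := (cfc_mul ..).symm
    _ = cfc id C := cfc_congr fun x hx ↦ Real.mul_self_sqrt (hspec hx)
    _ = C := cfc_id ℝ C

lemma transpose_cfc (f : ℝ → ℝ) (C : Matrix I I ℝ) : (cfc f C)ᵀ = cfc f C := by
  simpa [star_eq_conjTranspose] using (cfc_predicate f C).star_eq

lemma dotProduct_cfc_mulVec (f : ℝ → ℝ) (C : Matrix I I ℝ) (w η : I → ℝ) :
    w ⬝ᵥ cfc f C *ᵥ η = cfc f C *ᵥ w ⬝ᵥ η := by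
  rw [dotProduct_mulVec, ← mulVec_transpose, transpose_cfc]

lemma integrable_exp_dotProduct_gaussianMeasure (hC : C.PosSemidef) (w : I → ℝ) :
    Integrable (fun ζ ↦ Real.exp (w ⬝ᵥ ζ)) (gaussianMeasure hC) := by
  rw [gaussianMeasure_eq_map_cfc_sqrt, integrable_map_measure (by fun_prop)
    (measurable_mulVec _).aemeasurable]
  simpa only [Function.comp_def, dotProduct_cfc_mulVec] using
    integrable_exp_dotProduct_pi_gaussianReal (cfc Real.sqrt C *ᵥ w)

lemma integral_exp_dotProduct_gaussianMeasure (hC : C.PosSemidef) (w : I → ℝ) :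
    ∫ ζ, Real.exp (w ⬝ᵥ ζ) ∂gaussianMeasure hC = Real.exp (w ⬝ᵥ C *ᵥ w / 2) := by
  rw [gaussianMeasure_eq_map_cfc_sqrt, integral_map (measurable_mulVec _).aemeasurable
    (by fun_prop)]
  simp_rw [dotProduct_cfc_mulVec Real.sqrt C w]
  rw [integral_exp_dotProduct_pi_gaussianReal, ← dotProduct_cfc_mulVec, mulVec_mulVec,
    hC.cfc_sqrt_mul_self]

end GaussianMeasure

lemma dotProduct_mulVec_le_opNorm {I : Type*} [Fintype I] [DecidableEq I] (C : Matrix I I ℝ)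
    (x : I → ℝ) : x ⬝ᵥ C *ᵥ x ≤ ‖toEuclideanCLM (𝕜 := ℝ) C‖ * (x ⬝ᵥ x) := by
  set y : EuclideanSpace ℝ I := WithLp.toLp 2 x
  have hnorm : ‖y‖ ^ 2 = x ⬝ᵥ x := by
    rw [EuclideanSpace.real_norm_sq_eq]
    simp [y, dotProduct, sq]
  calc x ⬝ᵥ C *ᵥ x = inner ℝ y (toEuclideanCLM (𝕜 := ℝ) C y) := by
        simp [y, toEuclideanCLM_toLp, PiLp.inner_apply, dotProduct, mul_comm]
    _ ≤ ‖y‖ * ‖toEuclideanCLM (𝕜 := ℝ) C y‖ := real_inner_le_norm _ _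
    _ ≤ ‖y‖ * (‖toEuclideanCLM (𝕜 := ℝ) C‖ * ‖y‖) := by
        gcongr
        exact ContinuousLinearMap.le_opNorm _ _
    _ = ‖toEuclideanCLM (𝕜 := ℝ) C‖ * (x ⬝ᵥ x) := by rw [← hnorm]; ring

lemma mul_dotProduct_mulVec_le_of_mul_opNorm_le {I : Type*} [Fintype I] [DecidableEq I]
    {C : Matrix I I ℝ} {k : ℝ} (hk : 0 ≤ k) (hkC : k * ‖toEuclideanCLM (𝕜 := ℝ) C‖ ≤ 1)
    (x : I → ℝ) : k * (x ⬝ᵥ C *ᵥ x) ≤ x ⬝ᵥ x := by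
  have hx : 0 ≤ x ⬝ᵥ x := Finset.sum_nonneg fun i _ ↦ mul_self_nonneg (x i)
  calc k * (x ⬝ᵥ C *ᵥ x) ≤ k * (‖toEuclideanCLM (𝕜 := ℝ) C‖ * (x ⬝ᵥ x)) := by
        gcongr
        exact dotProduct_mulVec_le_opNorm C x
    _ ≤ x ⬝ᵥ x := by rw [← mul_assoc]; exact mul_le_of_le_one_left hx hkC

section Indicator

variable {I : Type*} [Fintype I]

lemma indicator_dotProduct (X : Finset I) (φ ζ : I → ℝ) :
    (X : Set I).indicator φ ⬝ᵥ ζ = ∑ x ∈ X, φ x * ζ x := by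
  simp_rw [dotProduct, ← Set.indicator_mul_left]
  exact Finset.sum_indicator_subset _ (Finset.subset_univ X)

lemma indicator_dotProduct_self (X : Finset I) (φ : I → ℝ) :
    (X : Set I).indicator φ ⬝ᵥ (X : Set I).indicator φ = ∑ x ∈ X, φ x ^ 2 := by
  rw [indicator_dotProduct]
  exact Finset.sum_congr rfl fun x hx ↦ by simp [hx, sq]

lemma neg_mul_sum_sq_add_le {k : ℝ} (hk : 0 ≤ k) (X : Finset I) (φ ζ : I → ℝ) :
    -(k / 2) * ∑ x ∈ X, (φ x + ζ x) ^ 2 ≤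
      -(3 * k / 8) * ∑ x ∈ X, φ x ^ 2 + (-(k / 2) • (X : Set I).indicator φ) ⬝ᵥ ζ := by
  rw [smul_dotProduct, indicator_dotProduct, smul_eq_mul, Finset.mul_sum, Finset.mul_sum,
    Finset.mul_sum, ← Finset.sum_add_distrib]
  exact Finset.sum_le_sum fun x _ ↦ by nlinarith [mul_nonneg hk (sq_nonneg (φ x + 2 * ζ x))]

end Indicator

/-- Gaussian contraction estimate for the decaying large-field regulator: if
`k‖C‖_op ≤ 1` (operator norm on Euclidean space, i.e. the largest eigenvalue), then
`∫ exp(-(k/2) ∑_{x∈X} (φ_x+ζ_x)²) dμ_C(ζ) ≤ exp(-(k/4) ∑_{x∈X} φ_x²)`. -/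
theorem gaussian_exp_quadratic_contraction {I : Type*} [Fintype I] [DecidableEq I]
    (C : Matrix I I ℝ) (hC : C.PosSemidef) (X : Finset I) (k : ℝ) (hk : 0 < k)
    (hkC : k * ‖Matrix.toEuclideanCLM (𝕜 := ℝ) C‖ ≤ 1) (φ : I → ℝ) :
    ∫ ζ, Real.exp (-(k / 2) * ∑ x ∈ X, (φ x + ζ x) ^ 2) ∂(gaussianMeasure hC) ≤
      Real.exp (-(k / 4) * ∑ x ∈ X, (φ x) ^ 2) := by
  set S := ∑ x ∈ X, φ x ^ 2
  set w := -(k / 2) • (X : Set I).indicator φ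
  have hquad : w ⬝ᵥ C *ᵥ w / 2 ≤ k / 8 * S := by
    have h := mul_dotProduct_mulVec_le_of_mul_opNorm_le hk.le hkC ((X : Set I).indicator φ)
    rw [indicator_dotProduct_self] at h
    simp only [w, mulVec_smul, smul_dotProduct, dotProduct_smul, smul_eq_mul]
    linarith [mul_le_mul_of_nonneg_left h hk.le]
  calc _ ≤ ∫ ζ, Real.exp (-(3 * k / 8) * S + w ⬝ᵥ ζ) ∂gaussianMeasure hC := by
        refine integral_mono_of_nonneg (ae_of_all _ fun _ ↦ (Real.exp_pos _).le) ?_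
          (ae_of_all _ fun ζ ↦ Real.exp_le_exp.2 (neg_mul_sum_sq_add_le hk.le X φ ζ))
        simpa only [Real.exp_add] using
          (integrable_exp_dotProduct_gaussianMeasure hC w).const_mul _
    _ = Real.exp (-(3 * k / 8) * S + w ⬝ᵥ C *ᵥ w / 2) := by
        simp only [Real.exp_add]
        rw [integral_const_mul, integral_exp_dotProduct_gaussianMeasure]
    _ ≤ _ := Real.exp_le_exp.2 (by linarith)
end

section
/- There exists a constant C > 0, depending only on n, such that for every g > 0, every κ > 0 and every v ∈ ℝⁿ, the Taylor seminorm of the function F(w) = exp(−(g/4)·|w|⁴) (with |w| the Euclidean norm on ℝⁿ) satisfies ‖F‖_{κ,T(v)} ≤ C^{g·κ⁴} · exp(−(g/8)·|v|⁴). In particular the defining series of the seminorm converges. -/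
/-!
Write `F = exp ∘ φ` with `φ = -(g/4) Q²` and `Q w = |w|²`, and majorize the Taylor seminorm by
`T_κ f = ∑ κ^r/r! ‖D^r f(v)‖` with operator norms. The Leibniz rule makes `T_κ` submultiplicative;
since `T_κ (w ↦ wᵢ) ≤ |vᵢ| + κ`, Cauchy–Schwarz gives `T_κ Q ≤ (|v| + √n κ)²` and hence
`T_κ φ ≤ (g/4)(|v| + √n κ)⁴`. Differentiating `D F = F • D φ` repeatedly bounds `‖D^r F(v)‖` by
`F(v)` times the complete Bell polynomial of the `‖D^j φ(v)‖`, whose exponential generating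
function is at most `exp (T_κ φ - |φ v|)`. So `T_κ F ≤ exp ((g/4)(|v| + √n κ)⁴ - (g/2)|v|⁴)`, and
`(a + b)⁴ ≤ (3/2) a⁴ + 1024 b⁴` turns this into the bound with `C = exp (256 n²)`.
-/

open scoped ENNReal

/-- The Taylor seminorm `‖F‖_{κ,T(v)} = ∑_r (κ^r/r!) sup{|D^r F(v)(u₁,…,u_r)| : ‖u_j‖_∞ ≤ 1}`,
valued in `ℝ≥0∞`.  Here `Fin n → ℝ` carries the sup norm, so `‖u j‖` is `‖u j‖_∞`. -/
noncomputable def taylorSeminorm {n : ℕ} (κ : ℝ) (F : (Fin n → ℝ) → ℝ) (v : Fin n → ℝ) :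
    ℝ≥0∞ :=
  ∑' r : ℕ, ENNReal.ofReal (κ ^ r / r.factorial) *
    ⨆ u ∈ {u : Fin r → Fin n → ℝ | ∀ j, ‖u j‖ ≤ 1},
      ENNReal.ofReal |iteratedFDeriv ℝ r F v u|

open scoped ContDiff
open Finset

theorem ENNReal.tsum_mul_tsum_eq_tsum_sum_range (f g : ℕ → ℝ≥0∞) :
    (∑' i, f i) * ∑' j, g j = ∑' r, ∑ i ∈ range (r + 1), f i * g (r - i) := by
  calc (∑' i, f i) * ∑' j, g j = ∑' p : ℕ × ℕ, f p.1 * g p.2 := by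
        rw [ENNReal.tsum_prod (f := fun i j => f i * g j), ← ENNReal.tsum_mul_right]
        simp_rw [ENNReal.tsum_mul_left]
    _ = ∑' q : Σ r, antidiagonal r, f q.2.1.1 * g q.2.1.2 :=
        (HasAntidiagonal.sigmaAntidiagonalEquivProd.tsum_eq (fun p : ℕ × ℕ => f p.1 * g p.2)).symm
    _ = ∑' r, ∑ i ∈ range (r + 1), f i * g (r - i) := by
        rw [ENNReal.tsum_sigma']
        simp_rw [← Nat.sum_antidiagonal_eq_sum_range_succ fun i j => f i * g j,
          ← Finset.tsum_subtype]

section TaylorNorm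

variable {E F 𝔸 : Type*} [NormedAddCommGroup E] [NormedSpace ℝ E]
  [NormedAddCommGroup F] [NormedSpace ℝ F]

noncomputable def taylorNorm (κ : ℝ) (f : E → F) (x : E) : ℝ≥0∞ :=
  ∑' r : ℕ, ENNReal.ofReal (κ ^ r / r.factorial * ‖iteratedFDeriv ℝ r f x‖)

theorem taylorNorm_const (κ : ℝ) (c : F) (x : E) :
    taylorNorm κ (fun _ => c) x = ENNReal.ofReal ‖c‖ := by
  rw [taylorNorm, tsum_eq_single 0 fun r hr => by simp [iteratedFDeriv_const_of_ne hr]]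
  simp

theorem ContinuousLinearMap.taylorNorm_eq (L : E →L[ℝ] F) (κ : ℝ) (x : E) :
    taylorNorm κ L x = ENNReal.ofReal ‖L x‖ + ENNReal.ofReal (κ * ‖L‖) := by
  have hD : ∀ r, ‖iteratedFDeriv ℝ (r + 1) L x‖ = ‖iteratedFDeriv ℝ r (fun _ => L) x‖ := by
    intro r
    rw [← norm_iteratedFDeriv_fderiv]
    congr 3
    exact funext fun _ => L.fderiv
  rw [taylorNorm, tsum_eq_sum (s := range 2)]
  · simp [sum_range_succ, hD]
  · intro r hr
    obtain ⟨k, rfl⟩ : ∃ k, r = k + 1 + 1 := ⟨r - 2, by simp at hr; omega⟩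
    simp [hD, iteratedFDeriv_const_of_ne (Nat.succ_ne_zero k)]

theorem taylorNorm_sum_le {ι : Type*} (s : Finset ι) {f : ι → E → F}
    (hf : ∀ i ∈ s, ContDiff ℝ ∞ (f i)) {κ : ℝ} (hκ : 0 ≤ κ) (x : E) :
    taylorNorm κ (fun y => ∑ i ∈ s, f i y) x ≤ ∑ i ∈ s, taylorNorm κ (f i) x := by
  simp_rw [taylorNorm]
  rw [← Summable.tsum_finsetSum fun i _ => ENNReal.summable]
  refine ENNReal.tsum_le_tsum fun r => ?_
  rw [← ENNReal.ofReal_sum_of_nonneg fun i _ => by positivity, ← Finset.mul_sum]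
  refine ENNReal.ofReal_le_ofReal (mul_le_mul_of_nonneg_left ?_ (by positivity))
  rw [iteratedFDeriv_sum fun i hi => (hf i hi).of_le (by exact_mod_cast le_top), Finset.sum_apply]
  exact norm_sum_le _ _

variable [NormedRing 𝔸] [NormedAlgebra ℝ 𝔸]

theorem taylorNorm_mul_le {f g : E → 𝔸} (hf : ContDiff ℝ ∞ f) (hg : ContDiff ℝ ∞ g)
    {κ : ℝ} (hκ : 0 ≤ κ) (x : E) :
    taylorNorm κ (fun y => f y * g y) x ≤ taylorNorm κ f x * taylorNorm κ g x := by
  rw [taylorNorm, taylorNorm, taylorNorm, ENNReal.tsum_mul_tsum_eq_tsum_sum_range]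
  refine ENNReal.tsum_le_tsum fun r => ?_
  have hLeibniz : κ ^ r / r.factorial * ‖iteratedFDeriv ℝ r (fun y => f y * g y) x‖ ≤
      ∑ i ∈ range (r + 1), κ ^ i / i.factorial * ‖iteratedFDeriv ℝ i f x‖ *
        (κ ^ (r - i) / (r - i).factorial * ‖iteratedFDeriv ℝ (r - i) g x‖) := by
    refine (mul_le_mul_of_nonneg_left (norm_iteratedFDeriv_mul_le hf hg x
      (by exact_mod_cast le_top)) (by positivity)).trans_eq ?_
    rw [Finset.mul_sum]
    refine Finset.sum_congr rfl fun i hi => ?_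
    have hir : i ≤ r := Nat.lt_succ_iff.mp (Finset.mem_range.mp hi)
    rw [Nat.cast_choose ℝ hir, ← pow_mul_pow_sub κ hir]
    field_simp
  refine (ENNReal.ofReal_le_ofReal hLeibniz).trans_eq ?_
  rw [ENNReal.ofReal_sum_of_nonneg fun i _ => by positivity]
  exact Finset.sum_congr rfl fun i _ => ENNReal.ofReal_mul (by positivity)

theorem taylorNorm_pow_le [NormOneClass 𝔸] {f : E → 𝔸} (hf : ContDiff ℝ ∞ f) {κ : ℝ} (hκ : 0 ≤ κ)
    (x : E) (k : ℕ) : taylorNorm κ (fun y => f y ^ k) x ≤ taylorNorm κ f x ^ k := by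
  induction k with
  | zero => simp [taylorNorm_const]
  | succ k ih =>
    simp_rw [pow_succ]
    exact (taylorNorm_mul_le (hf.pow k) hf hκ x).trans (by gcongr)

end TaylorNorm

/-- The complete exponential Bell polynomials evaluated at `b 1, b 2, …`: the coefficients of
`exp (∑ j ≥ 1, b j t^j / j!) = ∑ r, completeBell b r * t^r / r!`. -/
noncomputable def completeBell (b : ℕ → ℝ) : ℕ → ℝ
  | 0 => 1
  | r + 1 => ∑ i : Fin (r + 1), (r.choose i : ℝ) * b (r + 1 - i) * completeBell b i

theorem completeBell_zero (b : ℕ → ℝ) : completeBell b 0 = 1 := by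
  rw [completeBell]

theorem completeBell_succ (b : ℕ → ℝ) (r : ℕ) :
    completeBell b (r + 1) =
      ∑ i ∈ range (r + 1), (r.choose i : ℝ) * b (r + 1 - i) * completeBell b i := by
  rw [completeBell,
    Fin.sum_univ_eq_sum_range fun i => (r.choose i : ℝ) * b (r + 1 - i) * completeBell b i]

theorem completeBell_nonneg {b : ℕ → ℝ} (hb : ∀ j, 0 ≤ b j) (r : ℕ) : 0 ≤ completeBell b r := by
  induction r using Nat.strong_induction_on with
  | _ r ih =>
    cases r with
    | zero => simp [completeBell_zero]
    | succ r =>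
      rw [completeBell_succ]
      exact sum_nonneg fun i hi => by
        have := ih i (by simp at hi; omega)
        have := hb (r + 1 - i)
        positivity

theorem sum_range_sum_range_succ_mul_le {u v : ℕ → ℝ} (hu : ∀ j, 0 ≤ u j) (hv : ∀ i, 0 ≤ v i)
    (M : ℕ) :
    ∑ r ∈ range M, ∑ i ∈ range (r + 1), u (r - i) * v i ≤
      (∑ j ∈ range M, u j) * ∑ i ∈ range M, v i := by
  rw [sum_range_diag_flip M fun i k => u k * v i, mul_sum]
  refine sum_le_sum fun i _ => ?_
  rw [← sum_mul, mul_comm _ (v i), mul_comm _ (v i)]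
  exact mul_le_mul_of_nonneg_left (sum_le_sum_of_subset_of_nonneg
    (range_subset_range.mpr (Nat.sub_le M i)) fun j _ _ => hu j) (hv i)

theorem hasDerivAt_sum_range_mul_pow_succ_div (c : ℕ → ℝ) (M : ℕ) (t : ℝ) :
    HasDerivAt (fun t => ∑ r ∈ range M, c r * t ^ (r + 1) / (r + 1).factorial)
      (∑ r ∈ range M, c r * t ^ r / r.factorial) t := by
  refine HasDerivAt.fun_sum fun r _ => ?_
  refine (((hasDerivAt_pow (r + 1) t).const_mul (c r)).div_const
    ((r + 1).factorial : ℝ)).congr_deriv ?_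
  rw [Nat.factorial_succ]
  push_cast
  field_simp

theorem le_mul_exp_sub_of_hasDerivAt {S P S' P' : ℝ → ℝ} {a : ℝ}
    (hS : ∀ t, HasDerivAt S (S' t) t) (hP : ∀ t, HasDerivAt P (P' t) t)
    (hSP : ∀ t, a ≤ t → S' t ≤ P' t * S t) {t : ℝ} (ht : a ≤ t) :
    S t ≤ S a * Real.exp (P t - P a) := by
  have hderiv : ∀ t, HasDerivAt (fun t => S t * Real.exp (-P t))
      (S' t * Real.exp (-P t) + S t * (Real.exp (-P t) * -P' t)) t :=
    fun t => (hS t).mul (hP t).neg.exp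
  have hanti : AntitoneOn (fun t => S t * Real.exp (-P t)) (Set.Ici a) := by
    refine antitoneOn_of_deriv_nonpos (convex_Ici a)
      (fun t _ => (hderiv t).continuousAt.continuousWithinAt)
      (fun t _ => (hderiv t).differentiableAt.differentiableWithinAt) fun t ht => ?_
    rw [interior_Ici] at ht
    rw [(hderiv t).deriv]
    nlinarith [hSP t (le_of_lt ht), Real.exp_pos (-P t)]
  have := hanti Set.self_mem_Ici ht ht
  rw [Real.exp_sub, ← mul_div_assoc, le_div_iff₀ (Real.exp_pos _)]
  simpa only [Real.exp_neg, ← div_eq_mul_inv, div_le_div_iff₀ (Real.exp_pos _) (Real.exp_pos _)]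
    using this

theorem completeBell_succ_mul_pow_div (b : ℕ → ℝ) (r : ℕ) (t : ℝ) :
    completeBell b (r + 1) * t ^ r / r.factorial = ∑ i ∈ range (r + 1),
      b (r - i + 1) * t ^ (r - i) / (r - i).factorial *
        (completeBell b i * t ^ i / i.factorial) := by
  rw [completeBell_succ, sum_mul, sum_div]
  refine sum_congr rfl fun i hi => ?_
  have hir : i ≤ r := Nat.lt_succ_iff.mp (mem_range.mp hi)
  rw [Nat.cast_choose ℝ hir, ← pow_mul_pow_sub t hir, Nat.sub_add_comm hir]
  field_simp

theorem sum_range_completeBell_mul_pow_div_le_exp {b : ℕ → ℝ} (hb : ∀ j, 0 ≤ b j) {t : ℝ}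
    (ht : 0 ≤ t) (M : ℕ) :
    ∑ r ∈ range (M + 1), completeBell b r * t ^ r / r.factorial ≤
      Real.exp (∑ j ∈ range M, b (j + 1) * t ^ (j + 1) / (j + 1).factorial) := by
  set S := fun s : ℝ => ∑ r ∈ range (M + 1), completeBell b r * s ^ r / r.factorial
  set P := fun s : ℝ => ∑ j ∈ range M, b (j + 1) * s ^ (j + 1) / (j + 1).factorial
  have hS : ∀ s, HasDerivAt S (∑ r ∈ range M, completeBell b (r + 1) * s ^ r / r.factorial) s := by
    intro s
    have hS_eq : S = fun s => completeBell b 0 +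
        ∑ r ∈ range M, completeBell b (r + 1) * s ^ (r + 1) / (r + 1).factorial :=
      funext fun s => by simp [S, sum_range_succ', add_comm]
    rw [hS_eq]
    exact (hasDerivAt_sum_range_mul_pow_succ_div _ M s).const_add _
  have hP : ∀ s, HasDerivAt P (∑ j ∈ range M, b (j + 1) * s ^ j / j.factorial) s :=
    hasDerivAt_sum_range_mul_pow_succ_div _ M
  have hc := completeBell_nonneg hb
  have hSP : ∀ s : ℝ, 0 ≤ s → ∑ r ∈ range M, completeBell b (r + 1) * s ^ r / r.factorial ≤
      (∑ j ∈ range M, b (j + 1) * s ^ j / j.factorial) * S s := by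
    intro s hs
    simp_rw [completeBell_succ_mul_pow_div]
    refine (sum_range_sum_range_succ_mul_le (u := fun j => b (j + 1) * s ^ j / j.factorial)
      (v := fun i => completeBell b i * s ^ i / i.factorial)
      (fun j => by have := hb (j + 1); positivity)
      (fun i => by have := hc i; positivity) M).trans ?_
    refine mul_le_mul_of_nonneg_left (sum_le_sum_of_subset_of_nonneg
      (range_subset_range.mpr M.le_succ) fun i _ _ => ?_) ?_
    · have := hc i; positivity
    · exact sum_nonneg fun j _ => by have := hb (j + 1); positivity
  have hbound := le_mul_exp_sub_of_hasDerivAt hS hP hSP ht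
  have hS0 : S 0 = 1 := by simp [S, sum_range_succ', completeBell_zero]
  have hP0 : P 0 = 0 := by simp [P]
  rwa [hS0, hP0, one_mul, sub_zero] at hbound

section ExpComp

variable {E : Type*} [NormedAddCommGroup E] [NormedSpace ℝ E]

theorem norm_iteratedFDeriv_exp_comp_le {φ : E → ℝ} (hφ : ContDiff ℝ ∞ φ) (x : E) (r : ℕ) :
    ‖iteratedFDeriv ℝ r (fun y => Real.exp (φ y)) x‖ ≤
      Real.exp (φ x) * completeBell (fun j => ‖iteratedFDeriv ℝ j φ x‖) r := by
  induction r using Nat.strong_induction_on with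
  | _ r ih =>
    cases r with
    | zero => simp [completeBell_zero]
    | succ r =>
      have hfderiv :
          fderiv ℝ (fun y => Real.exp (φ y)) = fun y => Real.exp (φ y) • fderiv ℝ φ y :=
        funext fun y => ((hφ.differentiable (by simp)).differentiableAt.hasFDerivAt.exp).fderiv
      rw [← norm_iteratedFDeriv_fderiv, hfderiv, completeBell_succ, mul_sum]
      refine (norm_iteratedFDeriv_smul_le (hφ.exp) (hφ.fderiv_right (by simp)) x
        (by exact_mod_cast le_top)).trans (sum_le_sum fun i hi => ?_)
      have hir : i ≤ r := Nat.lt_succ_iff.mp (mem_range.mp hi)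
      rw [norm_iteratedFDeriv_fderiv, Nat.sub_add_comm hir]
      have := ih i (by omega)
      have := completeBell_nonneg (fun j => norm_nonneg (iteratedFDeriv ℝ j φ x)) i
      calc _ ≤ (r.choose i : ℝ) *
              (Real.exp (φ x) * completeBell (fun j => ‖iteratedFDeriv ℝ j φ x‖) i) *
            ‖iteratedFDeriv ℝ (r - i + 1) φ x‖ := by gcongr
        _ = _ := by ring

theorem taylorNorm_exp_comp_le {φ : E → ℝ} (hφ : ContDiff ℝ ∞ φ) {κ B : ℝ} (hκ : 0 ≤ κ)
    (hB : 0 ≤ B) (x : E) (hφB : taylorNorm κ φ x ≤ ENNReal.ofReal (|φ x| + B)) :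
    taylorNorm κ (fun y => Real.exp (φ y)) x ≤ ENNReal.ofReal (Real.exp (φ x + B)) := by
  set b := fun j => ‖iteratedFDeriv ℝ j φ x‖
  have hb : ∀ j, 0 ≤ b j := fun j => norm_nonneg _
  have hpartial : ∀ M, ∑ j ∈ range M, b (j + 1) * κ ^ (j + 1) / (j + 1).factorial ≤ B := by
    intro M
    have := (ENNReal.sum_le_tsum (range (M + 1))).trans hφB
    rw [← ENNReal.ofReal_sum_of_nonneg fun r _ => by positivity,
      ENNReal.ofReal_le_ofReal_iff (by positivity), sum_range_succ'] at this
    simp only [pow_zero, Nat.factorial_zero, Nat.cast_one, div_one, one_mul,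
      norm_iteratedFDeriv_zero, Real.norm_eq_abs] at this
    have heq : ∑ j ∈ range M, b (j + 1) * κ ^ (j + 1) / (j + 1).factorial =
        ∑ j ∈ range M, κ ^ (j + 1) / (j + 1).factorial * ‖iteratedFDeriv ℝ (j + 1) φ x‖ :=
      sum_congr rfl fun j _ => by simp only [b]; ring
    linarith
  rw [taylorNorm, ENNReal.tsum_eq_iSup_nat' (Filter.tendsto_add_atTop_nat 1)]
  refine iSup_le fun M => ?_
  rw [← ENNReal.ofReal_sum_of_nonneg fun r _ => by positivity]
  refine ENNReal.ofReal_le_ofReal ?_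
  calc ∑ r ∈ range (M + 1), κ ^ r / r.factorial * ‖iteratedFDeriv ℝ r (fun y => Real.exp (φ y)) x‖
      ≤ ∑ r ∈ range (M + 1), κ ^ r / r.factorial * (Real.exp (φ x) * completeBell b r) :=
        sum_le_sum fun r _ => by gcongr; exact norm_iteratedFDeriv_exp_comp_le hφ x r
    _ = Real.exp (φ x) * ∑ r ∈ range (M + 1), completeBell b r * κ ^ r / r.factorial := by
        rw [mul_sum]; exact sum_congr rfl fun r _ => by ring
    _ ≤ Real.exp (φ x) * Real.exp B := by
        gcongr
        exact (sum_range_completeBell_mul_pow_div_le_exp hb hκ M).trans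
          (Real.exp_le_exp.mpr (hpartial M))
    _ = Real.exp (φ x + B) := (Real.exp_add _ _).symm

end ExpComp

theorem taylorSeminorm_le_taylorNorm {n : ℕ} (κ : ℝ) (F : (Fin n → ℝ) → ℝ) (v : Fin n → ℝ) :
    taylorSeminorm κ F v ≤ taylorNorm κ F v := by
  refine ENNReal.tsum_le_tsum fun r => ?_
  rw [ENNReal.ofReal_mul' (norm_nonneg _)]
  gcongr
  refine iSup₂_le fun u hu => ENNReal.ofReal_le_ofReal ?_
  rw [← Real.norm_eq_abs]
  exact (ContinuousMultilinearMap.le_opNorm _ u).trans <| mul_le_of_le_one_right (norm_nonneg _)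
    (prod_le_one (fun j _ => norm_nonneg _) fun j _ => hu j)

theorem taylorNorm_sum_sq_le {n : ℕ} {κ : ℝ} (hκ : 0 ≤ κ) (v : Fin n → ℝ) :
    taylorNorm κ (fun w : Fin n → ℝ => ∑ i, w i ^ 2) v ≤
      ENNReal.ofReal ((√(∑ i, v i ^ 2) + √n * κ) ^ 2) := by
  have hcoord : ∀ i, taylorNorm κ (fun w : Fin n → ℝ => w i) v ≤ ENNReal.ofReal (|v i| + κ) := by
    intro i
    set L : (Fin n → ℝ) →L[ℝ] ℝ := ContinuousLinearMap.proj i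
    have hL : ‖L‖ ≤ 1 := L.opNorm_le_bound zero_le_one fun w => by
      rw [one_mul]; exact norm_le_pi_norm w i
    rw [show (fun w : Fin n → ℝ => w i) = L from rfl, L.taylorNorm_eq,
      ENNReal.ofReal_add (abs_nonneg _) hκ]
    gcongr
    · exact (Real.norm_eq_abs _).le
    · exact mul_le_of_le_one_right hκ hL
  have hsum_abs : ∑ i, |v i| ≤ √(∑ i, v i ^ 2) * √n := by
    simpa using Real.sum_mul_le_sqrt_mul_sqrt univ (fun i => |v i|) fun _ => 1
  calc taylorNorm κ (fun w : Fin n → ℝ => ∑ i, w i ^ 2) v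
      ≤ ∑ i, taylorNorm κ (fun w : Fin n → ℝ => w i ^ 2) v :=
        taylorNorm_sum_le univ (fun i _ => (contDiff_apply ℝ ℝ i).pow 2) hκ v
    _ ≤ ∑ i, ENNReal.ofReal ((|v i| + κ) ^ 2) := sum_le_sum fun i _ => by
        rw [ENNReal.ofReal_pow (by positivity)]
        exact (taylorNorm_pow_le (contDiff_apply ℝ ℝ i) hκ v 2).trans (by gcongr; exact hcoord i)
    _ = ENNReal.ofReal (∑ i, (|v i| + κ) ^ 2) :=
        (ENNReal.ofReal_sum_of_nonneg fun i _ => by positivity).symm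
    _ ≤ ENNReal.ofReal ((√(∑ i, v i ^ 2) + √n * κ) ^ 2) := by
        refine ENNReal.ofReal_le_ofReal ?_
        have hn : √(n : ℝ) ^ 2 = n := Real.sq_sqrt n.cast_nonneg
        have hs : √(∑ i, v i ^ 2) ^ 2 = ∑ i, v i ^ 2 := Real.sq_sqrt (by positivity)
        simp_rw [add_sq, sum_add_distrib, sq_abs, ← sum_mul, ← mul_sum]
        simp only [sum_const, card_univ, Fintype.card_fin, nsmul_eq_mul]
        nlinarith [mul_le_mul_of_nonneg_right hsum_abs hκ]

theorem add_pow_four_le (a b : ℝ) : (a + b) ^ 4 ≤ 3 / 2 * a ^ 4 + 1024 * b ^ 4 := by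
  nlinarith [sq_nonneg (a ^ 2 - 24 * b * a), sq_nonneg (a ^ 2 - 24 * b ^ 2),
    sq_nonneg (b * a - 24 * b ^ 2), sq_nonneg (a * b), sq_nonneg (a ^ 2 - b ^ 2),
    sq_nonneg (a ^ 2 - 4 * b * a), sq_nonneg (a ^ 2 - 48 * b ^ 2)]

theorem taylorNorm_quartic_le {n : ℕ} {g κ : ℝ} (hg : 0 ≤ g) (hκ : 0 ≤ κ) (v : Fin n → ℝ) :
    taylorNorm κ (fun w : Fin n → ℝ => -(g / 4) * (∑ i, w i ^ 2) ^ 2) v ≤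
      ENNReal.ofReal (g / 4 * (√(∑ i, v i ^ 2) + √n * κ) ^ 4) := by
  refine (taylorNorm_mul_le contDiff_const (by fun_prop) hκ v).trans ?_
  rw [taylorNorm_const, norm_neg, Real.norm_of_nonneg (by positivity),
    ENNReal.ofReal_mul (by positivity), show 4 = 2 * 2 by rfl, pow_mul,
    ENNReal.ofReal_pow (by positivity)]
  gcongr
  exact (taylorNorm_pow_le (by fun_prop) hκ v 2).trans (by gcongr; exact taylorNorm_sum_sq_le hκ v)

theorem quartic_stability_general (n : ℕ) :
    ∃ C : ℝ, 0 < C ∧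
      ∀ g κ : ℝ, 0 < g → 0 < κ → ∀ v : Fin n → ℝ,
        taylorSeminorm κ (fun w => Real.exp (-(g / 4) * (∑ i, (w i) ^ 2) ^ 2)) v ≤
          ENNReal.ofReal (C ^ (g * κ ^ 4) * Real.exp (-(g / 8) * (∑ i, (v i) ^ 2) ^ 2)) := by
  refine ⟨Real.exp (256 * n ^ 2), Real.exp_pos _, fun g κ hg hκ v => ?_⟩
  set σ := √(∑ i, v i ^ 2)
  set a := √n * κ
  have hs : ∑ i, v i ^ 2 = σ ^ 2 := (Real.sq_sqrt (by positivity)).symm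
  have ha : a ^ 4 = n ^ 2 * κ ^ 4 := by
    rw [show a ^ 4 = (a ^ 2) ^ 2 by ring, mul_pow, Real.sq_sqrt n.cast_nonneg]; ring
  have hB : 0 ≤ g / 4 * ((σ + a) ^ 4 - σ ^ 4) := by
    have : σ ^ 4 ≤ (σ + a) ^ 4 := by gcongr; exact le_add_of_nonneg_right (by positivity)
    nlinarith
  have hφ : taylorNorm κ (fun w : Fin n → ℝ => -(g / 4) * (∑ i, w i ^ 2) ^ 2) v ≤
      ENNReal.ofReal (|-(g / 4) * (∑ i, v i ^ 2) ^ 2| + g / 4 * ((σ + a) ^ 4 - σ ^ 4)) := by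
    have hsplit : g / 4 * (σ + a) ^ 4 =
        |-(g / 4) * (∑ i, v i ^ 2) ^ 2| + g / 4 * ((σ + a) ^ 4 - σ ^ 4) := by
      rw [hs, abs_of_nonpos (by nlinarith [pow_nonneg (sq_nonneg σ) 2])]
      ring
    exact (taylorNorm_quartic_le hg.le hκ.le v).trans_eq (congrArg ENNReal.ofReal hsplit)
  calc _ ≤ taylorNorm κ (fun w => Real.exp (-(g / 4) * (∑ i, w i ^ 2) ^ 2)) v :=
        taylorSeminorm_le_taylorNorm _ _ v
    _ ≤ ENNReal.ofReal (Real.exp (-(g / 4) * (∑ i, v i ^ 2) ^ 2 + g / 4 * ((σ + a) ^ 4 - σ ^ 4))) :=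
        taylorNorm_exp_comp_le (by fun_prop) hκ.le hB v hφ
    _ ≤ _ := by
        refine ENNReal.ofReal_le_ofReal ?_
        rw [← Real.exp_mul, ← Real.exp_add, Real.exp_le_exp, hs]
        nlinarith [mul_le_mul_of_nonneg_left (add_pow_four_le σ a) hg.le]

/-- Quartic large-field stability: there is `C > 0`, depending only on `n`, such that for all
`g, κ > 0` and all `v ∈ ℝⁿ`, the Taylor seminorm of `w ↦ exp(-(g/4)|w|⁴)` satisfies
`‖F‖_{κ,T(v)} ≤ C^{gκ⁴} exp(-(g/8)|v|⁴)`; in particular the defining series converges. -/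
theorem quartic_stability (n : ℕ) (hn : 1 ≤ n) :
    ∃ C : ℝ, 0 < C ∧
      ∀ g κ : ℝ, 0 < g → 0 < κ → ∀ v : Fin n → ℝ,
        taylorSeminorm κ (fun w => Real.exp (-(g / 4) * (∑ i, (w i) ^ 2) ^ 2)) v ≤
          ENNReal.ofReal (C ^ (g * κ ^ 4) * Real.exp (-(g / 8) * (∑ i, (v i) ^ 2) ^ 2)) :=
  quartic_stability_general n
end

section
/- For every n ≥ 1, every ν ∈ ℝ, every κ > 0 and every v ∈ ℝⁿ, the Taylor seminorm of the function F(w) = exp(−(ν/2)·|w|²) (with |w| the Euclidean norm on ℝⁿ) satisfies ‖F‖_{κ,T(v)} ≤ exp( 2n|ν|κ² + (−ν + (3/4)|ν|)·|v|² ). In particular the defining series of the seminorm converges. -/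
open scoped ENNReal

/-! The Gaussian `F` satisfies `DF(w) = F(w) • L w` with `L w = -ν ⟨w, ·⟩` linear, so Leibniz' rule
gives `‖D^{r+2}F(v)‖ ≤ ‖L v‖ ‖D^{r+1}F(v)‖ + (r + 1) ‖L‖ ‖D^r F(v)‖`. With `A = |ν| ∑ |vᵢ| ≥ ‖L v‖`
and `B = n |ν| ≥ ‖L‖` (sup norms), this three-term recursion is dominated by that of the positive
Hermite polynomials `H_r(A, B)`, the derivatives at `0` of `t ↦ exp (A t + B t² / 2)`. Hence
`‖F‖_{κ,T(v)} ≤ F(v) ∑ κ^r H_r(A, B) / r! = F(v) exp (A κ + B κ² / 2)`, and `κ |vᵢ| ≤ κ² + vᵢ² / 4`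
bounds the exponent. -/

open scoped Nat
open Finset

section Leibniz

variable {𝕜 E G : Type*} [NontriviallyNormedField 𝕜] [NormedAddCommGroup E] [NormedSpace 𝕜 E]
  [NormedAddCommGroup G] [NormedSpace 𝕜 G]

theorem ContinuousLinearMap.iteratedFDeriv_eq_zero_of_two_le (L : E →L[𝕜] G) {k : ℕ}
    (hk : 2 ≤ k) (x : E) : iteratedFDeriv 𝕜 k L x = 0 := by
  obtain ⟨k, rfl⟩ := Nat.exists_eq_add_of_le' hk
  rw [← norm_eq_zero, ← norm_iteratedFDeriv_fderiv]
  simp [funext fun x => L.fderiv (x := x), iteratedFDeriv_succ_const]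

theorem norm_iteratedFDeriv_one_of_fderiv_eq_smul {F : E → 𝕜} {L : E →L[𝕜] E →L[𝕜] 𝕜}
    (hF' : fderiv 𝕜 F = fun w => F w • L w) (v : E) :
    ‖iteratedFDeriv 𝕜 1 F v‖ = ‖F v‖ * ‖L v‖ := by
  rw [← norm_iteratedFDeriv_fderiv, norm_iteratedFDeriv_zero, hF', norm_smul]

/-- Leibniz' rule for `D^{r+1}(F • L)`: only two terms survive since `L` is linear. -/
theorem norm_iteratedFDeriv_add_two_le_of_fderiv_eq_smul {F : E → 𝕜} {L : E →L[𝕜] E →L[𝕜] 𝕜}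
    (hF : ContDiff 𝕜 ⊤ F) (hF' : fderiv 𝕜 F = fun w => F w • L w) (v : E) (r : ℕ) :
    ‖iteratedFDeriv 𝕜 (r + 2) F v‖ ≤
      ‖L v‖ * ‖iteratedFDeriv 𝕜 (r + 1) F v‖ + (r + 1) * ‖L‖ * ‖iteratedFDeriv 𝕜 r F v‖ := by
  rw [← norm_iteratedFDeriv_fderiv, hF']
  refine (norm_iteratedFDeriv_smul_le hF L.contDiff v le_top).trans ?_
  rw [sum_range_succ, sum_range_succ, sum_eq_zero fun i hi => by
    rw [L.iteratedFDeriv_eq_zero_of_two_le (by simp at hi; omega), norm_zero, mul_zero]]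
  have hD1 : ‖iteratedFDeriv 𝕜 1 L v‖ = ‖L‖ := by
    rw [← norm_iteratedFDeriv_fderiv, norm_iteratedFDeriv_zero, L.fderiv]
  rw [Nat.add_sub_cancel_left, Nat.sub_self, hD1, norm_iteratedFDeriv_zero,
    Nat.choose_succ_self_right, Nat.choose_self]
  push_cast
  linarith

end Leibniz

theorem Nat.doubleFactorial_two_mul_sub_one_mul (p : ℕ) :
    (2 * p - 1)‼ * (2 ^ p * p !) = (2 * p)! := by
  cases p with
  | zero => rfl
  | succ p =>
    rw [← Nat.doubleFactorial_two_mul, show 2 * (p + 1) - 1 = 2 * p + 1 by omega,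
      show 2 * (p + 1) = 2 * p + 1 + 1 by ring, Nat.factorial_eq_mul_doubleFactorial, mul_comm]

/-- The number of matchings with `p` edges on `r` points. -/
def matchingCount (r p : ℕ) : ℕ := r.choose (2 * p) * (2 * p - 1)‼

@[simp]
theorem matchingCount_zero_right (r : ℕ) : matchingCount r 0 = 1 := by
  simp [matchingCount]

theorem matchingCount_eq_zero_of_lt {r p : ℕ} (h : r < 2 * p) : matchingCount r p = 0 := by
  simp [matchingCount, Nat.choose_eq_zero_of_lt h]

/-- The last point is either unmatched or matched with one of the other `r + 1` points. -/
theorem matchingCount_add_two_add_one (r p : ℕ) :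
    matchingCount (r + 2) (p + 1) =
      matchingCount (r + 1) (p + 1) + (r + 1) * matchingCount r p := by
  have hchoose : (r + 1).choose (2 * p + 1) * (2 * p + 1) = (r + 1) * r.choose (2 * p) :=
    (Nat.add_one_mul_choose_eq r (2 * p)).symm
  simp only [matchingCount, show 2 * (p + 1) = 2 * p + 1 + 1 by ring, Nat.add_sub_cancel,
    Nat.choose_succ_succ (r + 1) (2 * p + 1), Nat.doubleFactorial_add_one (2 * p)]
  rw [← mul_assoc (r + 1), ← hchoose, Nat.succ_eq_add_one]
  ring

theorem matchingCount_mul {r p : ℕ} (h : 2 * p ≤ r) :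
    matchingCount r p * (2 ^ p * p ! * (r - 2 * p)!) = r ! := by
  rw [matchingCount, ← Nat.choose_mul_factorial_mul_factorial h,
    ← Nat.doubleFactorial_two_mul_sub_one_mul]
  ring

/-- The `r`-th derivative at `0` of `t ↦ exp (A t + B t² / 2)`, a Hermite polynomial with all
signs positive. The truncated exponent `r - 2 * p` is harmless: `matchingCount r p = 0` for
`r < 2 * p`. -/
noncomputable def posHermite (A B : ℝ) (r : ℕ) : ℝ :=
  ∑ p ∈ range (r + 1), (matchingCount r p : ℝ) * A ^ (r - 2 * p) * B ^ p

theorem posHermite_zero (A B : ℝ) : posHermite A B 0 = 1 := by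
  simp [posHermite]

theorem posHermite_one (A B : ℝ) : posHermite A B 1 = A := by
  simp [posHermite, sum_range_succ, matchingCount_eq_zero_of_lt]

theorem matchingCount_term_add_two (A B : ℝ) (r p : ℕ) :
    (matchingCount (r + 2) (p + 1) : ℝ) * A ^ (r + 2 - 2 * (p + 1)) * B ^ (p + 1) =
      A * (matchingCount (r + 1) (p + 1) * A ^ (r + 1 - 2 * (p + 1)) * B ^ (p + 1)) +
        (r + 1) * B * (matchingCount r p * A ^ (r - 2 * p) * B ^ p) := by
  have hA : A * (matchingCount (r + 1) (p + 1) * A ^ (r + 1 - 2 * (p + 1))) =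
      matchingCount (r + 1) (p + 1) * A ^ (r - 2 * p) := by
    rcases lt_or_ge (r + 1) (2 * (p + 1)) with h | h
    · simp [matchingCount_eq_zero_of_lt h]
    · rw [mul_left_comm, ← pow_succ', show r + 1 - 2 * (p + 1) + 1 = r - 2 * p by omega]
  rw [matchingCount_add_two_add_one, show r + 2 - 2 * (p + 1) = r - 2 * p by omega]
  push_cast
  linear_combination (-B ^ (p + 1)) * hA

theorem posHermite_add_two (A B : ℝ) (r : ℕ) :
    posHermite A B (r + 2) = A * posHermite A B (r + 1) + (r + 1) * B * posHermite A B r := by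
  have h₁ : posHermite A B (r + 1) = ∑ p ∈ range (r + 2),
      (matchingCount (r + 1) (p + 1) : ℝ) * A ^ (r + 1 - 2 * (p + 1)) * B ^ (p + 1) +
        A ^ (r + 1) := by
    rw [sum_range_succ, matchingCount_eq_zero_of_lt (show r + 1 < 2 * (r + 1 + 1) by omega),
      posHermite, sum_range_succ']
    simp
  have h₀ : ∑ p ∈ range (r + 2), (matchingCount r p : ℝ) * A ^ (r - 2 * p) * B ^ p =
      posHermite A B r := by
    simp [posHermite, sum_range_succ _ (r + 1),
      matchingCount_eq_zero_of_lt (show r < 2 * (r + 1) by omega)]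
  rw [posHermite, sum_range_succ', sum_congr rfl fun p _ => matchingCount_term_add_two A B r p,
    sum_add_distrib, ← mul_sum, ← mul_sum, h₀, h₁]
  simp only [matchingCount_zero_right, Nat.cast_one, one_mul, pow_zero, mul_one, Nat.mul_zero,
    Nat.sub_zero]
  ring

theorem le_mul_posHermite {a : ℕ → ℝ} {A B c : ℝ} (hA : 0 ≤ A) (hB : 0 ≤ B) (h₀ : a 0 ≤ c)
    (h₁ : a 1 ≤ c * A) (h : ∀ r : ℕ, a (r + 2) ≤ A * a (r + 1) + (r + 1) * B * a r) (r : ℕ) :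
    a r ≤ c * posHermite A B r := by
  induction r using Nat.twoStepInduction with
  | zero => simpa [posHermite_zero] using h₀
  | one => simpa [posHermite_one] using h₁
  | more r ih ih' =>
    calc a (r + 2) ≤ A * a (r + 1) + (r + 1) * B * a r := h r
      _ ≤ A * (c * posHermite A B (r + 1)) + (r + 1) * B * (c * posHermite A B r) := by
        gcongr
      _ = c * posHermite A B (r + 2) := by rw [posHermite_add_two]; ring

theorem ENNReal.tsum_ofReal_pow_div_factorial {x : ℝ} (hx : 0 ≤ x) :
    ∑' s : ℕ, ENNReal.ofReal (x ^ s / s !) = ENNReal.ofReal (Real.exp x) := by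
  rw [Real.exp_eq_exp_ℝ, NormedSpace.exp_eq_tsum_div,
    ENNReal.ofReal_tsum_of_nonneg (fun s => by positivity) (Real.summable_pow_div_factorial x)]

theorem ENNReal.tsum_ite_le_sub (k : ℕ) (f : ℕ → ℝ≥0∞) :
    ∑' r, (if k ≤ r then f (r - k) else 0) = ∑' s, f s := by
  rw [← (add_left_injective k).tsum_eq]
  · simp
  · intro r hr
    exact ⟨r - k, Nat.sub_add_cancel (by_contra fun h => hr (if_neg h))⟩

theorem pow_div_factorial_mul_matchingCount {A B κ : ℝ} {r p : ℕ} (h : 2 * p ≤ r) :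
    κ ^ r / r ! * (matchingCount r p * A ^ (r - 2 * p) * B ^ p) =
      (A * κ) ^ (r - 2 * p) / (r - 2 * p)! * ((B * κ ^ 2 / 2) ^ p / p !) := by
  obtain ⟨s, rfl⟩ := Nat.exists_eq_add_of_le' h
  have hm : (matchingCount (s + 2 * p) p : ℝ) * (2 ^ p * p ! * s !) = (s + 2 * p)! := by
    exact_mod_cast Nat.add_sub_cancel s (2 * p) ▸ matchingCount_mul h
  have hm₀ : (matchingCount (s + 2 * p) p : ℝ) ≠ 0 := by
    refine Nat.cast_ne_zero.2 fun h₀ => Nat.factorial_ne_zero (s + 2 * p) ?_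
    rw [← matchingCount_mul h, h₀, zero_mul]
  rw [Nat.add_sub_cancel, ← hm, div_pow (B * κ ^ 2)]
  field_simp
  ring

theorem tsum_ofReal_pow_div_factorial_mul_posHermite {A B κ : ℝ} (hA : 0 ≤ A) (hB : 0 ≤ B)
    (hκ : 0 ≤ κ) :
    ∑' r : ℕ, ENNReal.ofReal (κ ^ r / r ! * posHermite A B r) =
      ENNReal.ofReal (Real.exp (A * κ + B * κ ^ 2 / 2)) := by
  set X : ℕ → ℝ≥0∞ := fun s => ENNReal.ofReal ((A * κ) ^ s / s !)
  set Y : ℕ → ℝ≥0∞ := fun p => ENNReal.ofReal ((B * κ ^ 2 / 2) ^ p / p !)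
  have hterm : ∀ r p, ENNReal.ofReal (κ ^ r / r ! * (matchingCount r p * A ^ (r - 2 * p) * B ^ p)) =
      if 2 * p ≤ r then X (r - 2 * p) * Y p else 0 := by
    intro r p
    split_ifs with h
    · rw [pow_div_factorial_mul_matchingCount h, ENNReal.ofReal_mul (by positivity)]
    · simp [matchingCount_eq_zero_of_lt (not_le.mp h)]
  calc ∑' r : ℕ, ENNReal.ofReal (κ ^ r / r ! * posHermite A B r)
      = ∑' r : ℕ, ∑' p : ℕ, if 2 * p ≤ r then X (r - 2 * p) * Y p else 0 := by
        refine tsum_congr fun r => ?_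
        rw [posHermite, mul_sum, ENNReal.ofReal_sum_of_nonneg fun p _ => by positivity,
          tsum_eq_sum (s := range (r + 1)) fun p hp => if_neg (by simp at hp; omega)]
        exact sum_congr rfl fun p _ => hterm r p
    _ = ∑' p : ℕ, ∑' s : ℕ, X s * Y p := by
        rw [ENNReal.tsum_comm]
        exact tsum_congr fun p => ENNReal.tsum_ite_le_sub (2 * p) (X · * Y p)
    _ = (∑' s : ℕ, X s) * ∑' p : ℕ, Y p := by
        simp only [ENNReal.tsum_mul_right, ENNReal.tsum_mul_left]
    _ = ENNReal.ofReal (Real.exp (A * κ + B * κ ^ 2 / 2)) := by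
        rw [ENNReal.tsum_ofReal_pow_div_factorial (by positivity),
          ENNReal.tsum_ofReal_pow_div_factorial (by positivity),
          ← ENNReal.ofReal_mul (by positivity),
          Real.exp_add]

section Gaussian

variable {n : ℕ}

noncomputable def dotProductCLM (n : ℕ) : (Fin n → ℝ) →L[ℝ] (Fin n → ℝ) →L[ℝ] ℝ :=
  ∑ i : Fin n, (ContinuousLinearMap.proj i).smulRight (ContinuousLinearMap.proj i)

theorem dotProductCLM_apply (w : Fin n → ℝ) :
    dotProductCLM n w = ∑ i, w i • (ContinuousLinearMap.proj i : (Fin n → ℝ) →L[ℝ] ℝ) := by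
  ext u
  simp [dotProductCLM]

theorem norm_proj_le_one (i : Fin n) :
    ‖(ContinuousLinearMap.proj i : (Fin n → ℝ) →L[ℝ] ℝ)‖ ≤ 1 :=
  ContinuousLinearMap.opNorm_le_bound _ zero_le_one fun w => by simpa using norm_le_pi_norm w i

theorem norm_dotProductCLM_apply_le (w : Fin n → ℝ) : ‖dotProductCLM n w‖ ≤ ∑ i, |w i| := by
  rw [dotProductCLM_apply]
  refine (norm_sum_le _ _).trans (sum_le_sum fun i _ => ?_)
  rw [norm_smul, Real.norm_eq_abs]
  exact mul_le_of_le_one_right (abs_nonneg _) (norm_proj_le_one i)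

theorem norm_dotProductCLM_le : ‖dotProductCLM n‖ ≤ n := by
  rw [dotProductCLM]
  refine (norm_sum_le (E := (Fin n → ℝ) →L[ℝ] (Fin n → ℝ) →L[ℝ] ℝ) _ _).trans ?_
  refine (sum_le_sum fun i _ => ?_).trans (by simp : ∑ _i : Fin n, (1 : ℝ) ≤ n)
  rw [ContinuousLinearMap.norm_smulRight_apply]
  exact mul_le_one₀ (norm_proj_le_one i) (norm_nonneg _) (norm_proj_le_one i)

noncomputable def gaussian (ν : ℝ) (w : Fin n → ℝ) : ℝ :=
  Real.exp (-(ν / 2) * ∑ i, w i ^ 2)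

theorem gaussian_pos (ν : ℝ) (w : Fin n → ℝ) : 0 < gaussian ν w := Real.exp_pos _

theorem contDiff_gaussian (ν : ℝ) : ContDiff ℝ ⊤ (gaussian (n := n) ν) :=
  Real.contDiff_exp.comp (contDiff_const.mul (ContDiff.sum fun i _ =>
    (contDiff_apply ℝ ℝ i).pow 2))

theorem fderiv_gaussian (ν : ℝ) :
    fderiv ℝ (gaussian (n := n) ν) = fun w => gaussian ν w • ((-ν) • dotProductCLM n) w := by
  ext w : 1
  refine HasFDerivAt.fderiv ?_
  have hsq : HasFDerivAt (fun w : Fin n → ℝ => ∑ i, w i ^ 2) ((2 : ℝ) • dotProductCLM n w) w := by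
    rw [dotProductCLM_apply, smul_sum]
    refine HasFDerivAt.fun_sum fun i _ => ?_
    have hi := ((ContinuousLinearMap.proj i : (Fin n → ℝ) →L[ℝ] ℝ).hasFDerivAt (x := w)).pow 2
    refine hi.congr_fderiv ?_
    simp [smul_smul]
  refine (hsq.const_mul (-(ν / 2))).exp.congr_fderiv ?_
  ext u
  simp only [smul_apply, smul_eq_mul]
  rw [gaussian]
  ring

theorem norm_iteratedFDeriv_gaussian_le (ν : ℝ) (v : Fin n → ℝ) (r : ℕ) :
    ‖iteratedFDeriv ℝ r (gaussian ν) v‖ ≤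
      gaussian ν v * posHermite (|ν| * ∑ i, |v i|) (|ν| * n) r := by
  have hLv : ‖((-ν) • dotProductCLM n) v‖ ≤ |ν| * ∑ i, |v i| := by
    rw [smul_apply, norm_smul, norm_neg, Real.norm_eq_abs]
    gcongr
    exact norm_dotProductCLM_apply_le v
  have hL : ‖(-ν) • dotProductCLM n‖ ≤ |ν| * n := by
    refine (ContinuousLinearMap.opNorm_smul_le _ _).trans ?_
    rw [norm_neg, Real.norm_eq_abs]
    gcongr
    exact norm_dotProductCLM_le
  have hF := gaussian_pos ν v
  refine le_mul_posHermite (a := fun k => ‖iteratedFDeriv ℝ k (gaussian ν) v‖) (by positivity)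
    (by positivity) ?_ ?_ (fun k => ?_) r
  · rw [norm_iteratedFDeriv_zero, Real.norm_of_nonneg hF.le]
  · rw [norm_iteratedFDeriv_one_of_fderiv_eq_smul (fderiv_gaussian ν), Real.norm_of_nonneg hF.le]
    gcongr
  · refine (norm_iteratedFDeriv_add_two_le_of_fderiv_eq_smul (contDiff_gaussian ν)
      (fderiv_gaussian ν) v k).trans ?_
    gcongr

end Gaussian

theorem taylorSeminorm_le_tsum {n : ℕ} {κ : ℝ} (hκ : 0 ≤ κ) (F : (Fin n → ℝ) → ℝ) (v : Fin n → ℝ) :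
    taylorSeminorm κ F v ≤ ∑' r : ℕ, ENNReal.ofReal (κ ^ r / r ! * ‖iteratedFDeriv ℝ r F v‖) := by
  refine ENNReal.tsum_le_tsum fun r => ?_
  rw [ENNReal.ofReal_mul (by positivity)]
  gcongr
  refine iSup₂_le fun u hu => ENNReal.ofReal_le_ofReal ?_
  calc |iteratedFDeriv ℝ r F v u| ≤ ‖iteratedFDeriv ℝ r F v‖ * ∏ j, ‖u j‖ :=
        (iteratedFDeriv ℝ r F v).le_opNorm u
    _ ≤ ‖iteratedFDeriv ℝ r F v‖ :=
        mul_le_of_le_one_right (norm_nonneg _)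
          (prod_le_one (fun j _ => norm_nonneg _) fun j _ => hu j)

theorem mul_sum_abs_le {n : ℕ} (κ : ℝ) (v : Fin n → ℝ) :
    κ * ∑ i, |v i| ≤ n * κ ^ 2 + (∑ i, v i ^ 2) / 4 := by
  rw [mul_sum, sum_div]
  calc ∑ i, κ * |v i| ≤ ∑ i, (κ ^ 2 + v i ^ 2 / 4) :=
        sum_le_sum fun i _ => by nlinarith [sq_nonneg (κ - |v i| / 2), sq_abs (v i)]
    _ = n * κ ^ 2 + ∑ i, v i ^ 2 / 4 := by simp [sum_add_distrib]

theorem quadratic_stability_general (n : ℕ) (ν κ : ℝ) (hκ : 0 < κ) (v : Fin n → ℝ) :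
    taylorSeminorm κ (fun w => Real.exp (-(ν / 2) * ∑ i, (w i) ^ 2)) v ≤
      ENNReal.ofReal
        (Real.exp (2 * n * |ν| * κ ^ 2 + (-ν + (3 / 4) * |ν|) * ∑ i, (v i) ^ 2)) := by
  set A := |ν| * ∑ i, |v i|
  set B := |ν| * n
  have hexponent : -(ν / 2) * ∑ i, v i ^ 2 + (A * κ + B * κ ^ 2 / 2) ≤
      2 * n * |ν| * κ ^ 2 + (-ν + (3 / 4) * |ν|) * ∑ i, v i ^ 2 := by
    have := mul_le_mul_of_nonneg_left (mul_sum_abs_le κ v) (abs_nonneg ν)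
    have := mul_nonneg (sub_nonneg.2 (le_abs_self ν))
      (sum_nonneg fun i _ => sq_nonneg (v i) : 0 ≤ ∑ i, v i ^ 2)
    have : 0 ≤ n * |ν| * κ ^ 2 := by positivity
    nlinarith
  calc taylorSeminorm κ (gaussian ν) v
      ≤ ∑' r : ℕ, ENNReal.ofReal (κ ^ r / r ! * ‖iteratedFDeriv ℝ r (gaussian ν) v‖) :=
        taylorSeminorm_le_tsum hκ.le _ v
    _ ≤ ∑' r : ℕ, ENNReal.ofReal (gaussian ν v) * ENNReal.ofReal (κ ^ r / r ! * posHermite A B r) :=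
        ENNReal.tsum_le_tsum fun r => by
          rw [← ENNReal.ofReal_mul (gaussian_pos ν v).le, mul_left_comm]
          gcongr
          exact norm_iteratedFDeriv_gaussian_le ν v r
    _ = ENNReal.ofReal (gaussian ν v * Real.exp (A * κ + B * κ ^ 2 / 2)) := by
        rw [ENNReal.tsum_mul_left, tsum_ofReal_pow_div_factorial_mul_posHermite (by positivity)
          (by positivity) hκ.le, ← ENNReal.ofReal_mul (gaussian_pos ν v).le]
    _ ≤ _ := by
        rw [gaussian, ← Real.exp_add]
        exact ENNReal.ofReal_le_ofReal (Real.exp_le_exp.2 hexponent)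

/-- Quadratic stability: for every `n ≥ 1`, `ν ∈ ℝ`, `κ > 0` and `v ∈ ℝⁿ`, the Taylor
seminorm of `w ↦ exp(-(ν/2)|w|²)` satisfies
`‖F‖_{κ,T(v)} ≤ exp(2n|ν|κ² + (-ν + (3/4)|ν|)|v|²)`;
in particular the defining series converges. -/
theorem quadratic_stability (n : ℕ) (hn : 1 ≤ n) (ν κ : ℝ) (hκ : 0 < κ) (v : Fin n → ℝ) :
    taylorSeminorm κ (fun w => Real.exp (-(ν / 2) * ∑ i, (w i) ^ 2)) v ≤
      ENNReal.ofReal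
        (Real.exp (2 * n * |ν| * κ ^ 2 + (-ν + (3 / 4) * |ν|) * ∑ i, (v i) ^ 2)) :=
  quadratic_stability_general n ν κ hκ v
end

section
/- Let E be a finite-dimensional real normed vector space, D ⊆ E a nonempty open set, κ > 0, and (T_k)_{k≥1} a sequence of smooth functions T_k : E → ℝ such that M := sup_k sup_{x∈D} ∑_{r=0}^∞ (κ^r/r!)·‖D^r T_k(x)‖ < ∞ (where ‖D^r T_k(x)‖ is the operator norm of the r-th Fréchet derivative as an r-linear map), and such that T_k(x) → 0 as k → ∞ for every fixed x ∈ D. Then for every compact subset D' ⊆ D and every r ∈ ℕ, sup_{x∈D'} ‖D^r T_k(x)‖ → 0 as k → ∞. -/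
/-!
A uniform bound on the first derivatives makes the `T_k` equicontinuous, so pointwise
convergence to `0` is locally uniform. The higher derivatives follow by induction from the
interpolation inequality `‖Df(x)‖ ≤ 2 sup_{B(x,h)} ‖f‖ / h + h sup_{B(x,h)} ‖D²f‖`: if
`D^n T_k → 0` locally uniformly and `D^(n+2) T_k` stays bounded, taking first `h` small and
then `k` large makes `D^(n+1) T_k` small. The Taylor bound gives `‖D^n T_k‖ ≤ M n! / κ^n` on
`D` for every `n`.
-/

open Filter Metric Set Topology
open scoped ContDiff

lemma le_max_zero_of_tsum_ofReal_le {α : Type*} {a : α → ℝ} {M : ℝ}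
    (h : ∑' r, ENNReal.ofReal (a r) ≤ ENNReal.ofReal M) (n : α) : a n ≤ max M 0 := by
  rcases ENNReal.ofReal_le_ofReal_iff'.1 ((ENNReal.le_tsum n).trans h) with hle | hnonpos
  · exact hle.trans (le_max_left _ _)
  · exact hnonpos.trans (le_max_right _ _)

theorem TendstoUniformlyOn.tendsto_iSup_norm_zero {ι α G : Type*} [SeminormedAddCommGroup G]
    {p : Filter ι} {F : ι → α → G} {s : Set α} (h : TendstoUniformlyOn F 0 p s) :
    Tendsto (fun i => ⨆ x ∈ s, ‖F i x‖) p (𝓝 0) := by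
  rw [Metric.tendstoUniformlyOn_iff] at h
  rw [Metric.tendsto_nhds]
  intro ε hε
  filter_upwards [h (ε / 2) (half_pos hε)] with i hi
  have hle : ⨆ x ∈ s, ‖F i x‖ ≤ ε / 2 :=
    Real.iSup_le (fun x => Real.iSup_le (fun hx => by simpa using (hi x hx).le) (half_pos hε).le)
      (half_pos hε).le
  have hnonneg : 0 ≤ ⨆ x ∈ s, ‖F i x‖ :=
    Real.iSup_nonneg fun x => Real.iSup_nonneg fun _ => norm_nonneg _
  rw [Real.dist_0_eq_abs, abs_of_nonneg hnonneg]
  linarith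

theorem TendstoLocallyUniformlyOn.zero_of_norm_le {ι α G G' : Type*} [TopologicalSpace α]
    [SeminormedAddCommGroup G] [SeminormedAddCommGroup G'] {p : Filter ι} {s : Set α}
    {F : ι → α → G} {F' : ι → α → G'} (h : TendstoLocallyUniformlyOn F 0 p s)
    (hle : ∀ i x, ‖F' i x‖ ≤ ‖F i x‖) : TendstoLocallyUniformlyOn F' 0 p s := by
  rw [Metric.tendstoLocallyUniformlyOn_iff] at h ⊢
  intro ε hε x hx
  obtain ⟨t, ht, hFt⟩ := h ε hε x hx
  refine ⟨t, ht, hFt.mono fun i hi y hy => ?_⟩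
  simpa using (hle i y).trans_lt (by simpa using hi y hy)

section Derivatives

variable {E F : Type*} [NormedAddCommGroup E] [NormedSpace ℝ E]
  [NormedAddCommGroup F] [NormedSpace ℝ F]

theorem LinearIsometryEquiv.norm_fderiv_comp {G H : Type*} [NormedAddCommGroup G]
    [NormedSpace ℝ G] [NormedAddCommGroup H] [NormedSpace ℝ H] (e : G ≃ₗᵢ[ℝ] H) (g : E → G)
    (x : E) : ‖fderiv ℝ (e ∘ g) x‖ = ‖fderiv ℝ g x‖ := by
  rw [e.comp_fderiv]
  exact LinearIsometry.norm_toContinuousLinearMap_comp _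

theorem norm_fderiv_le_of_norm_le_of_norm_fderiv_fderiv_le {f : E → F} {x : E} {h S L : ℝ}
    (hh : 0 < h)
    (hf : ∀ y ∈ closedBall x h, DifferentiableAt ℝ f y)
    (hf' : ∀ y ∈ closedBall x h, DifferentiableAt ℝ (fderiv ℝ f) y)
    (hS : ∀ y ∈ closedBall x h, ‖f y‖ ≤ S)
    (hL : ∀ y ∈ closedBall x h, ‖fderiv ℝ (fderiv ℝ f) y‖ ≤ L) :
    ‖fderiv ℝ f x‖ ≤ 2 * S / h + L * h := by
  have hx : x ∈ closedBall x h := mem_closedBall_self hh.le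
  have hS0 : 0 ≤ S := (norm_nonneg _).trans (hS x hx)
  have hL0 : 0 ≤ L := (norm_nonneg (fderiv ℝ (fderiv ℝ f) x)).trans (hL x hx)
  have hconv : Convex ℝ (closedBall x h) := convex_closedBall x h
  have hDf : ∀ z ∈ closedBall x h, ‖fderiv ℝ f z - fderiv ℝ f x‖ ≤ L * h := fun z hz =>
    (hconv.norm_image_sub_le_of_norm_fderiv_le hf' hL hx hz).trans
      (mul_le_mul_of_nonneg_left (mem_closedBall_iff_norm.1 hz) hL0)
  refine ContinuousLinearMap.opNorm_le_of_unit_norm (by positivity) fun u hu => ?_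
  have hxu : x + h • u ∈ closedBall x h := by
    simp [norm_smul, hu, abs_of_pos hh]
  have htaylor := hconv.norm_image_sub_le_of_norm_fderiv_le' hf hDf hx hxu
  rw [add_sub_cancel_left, norm_smul, hu, Real.norm_of_nonneg hh.le, mul_one] at htaylor
  have hDfu : h * ‖fderiv ℝ f x u‖ ≤ 2 * S + L * h * h := calc
    h * ‖fderiv ℝ f x u‖
        = ‖(f (x + h • u) - f x) - (f (x + h • u) - f x - fderiv ℝ f x (h • u))‖ := by
      rw [sub_sub_cancel, map_smul, norm_smul, Real.norm_of_nonneg hh.le]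
    _ ≤ ‖f (x + h • u)‖ + ‖f x‖ + ‖f (x + h • u) - f x - fderiv ℝ f x (h • u)‖ :=
      (norm_sub_le _ _).trans (by gcongr; exact norm_sub_le _ _)
    _ ≤ S + S + L * h * h := by gcongr <;> apply hS <;> assumption
    _ = 2 * S + L * h * h := by ring
  rw [show 2 * S / h + L * h = (2 * S + L * h * h) / h by field_simp, le_div_iff₀ hh]
  linarith

variable [ProperSpace E] {ι : Type*} {p : Filter ι} {f : ι → E → F} {U : Set E} {C : ℝ}

theorem tendstoLocallyUniformlyOn_zero_of_norm_fderiv_le (hU : IsOpen U)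
    (hf : ∀ i, ∀ x ∈ U, DifferentiableAt ℝ (f i) x)
    (hC : ∀ i, ∀ x ∈ U, ‖fderiv ℝ (f i) x‖ ≤ C)
    (hpt : ∀ x ∈ U, Tendsto (fun i => f i x) p (𝓝 0)) : TendstoLocallyUniformlyOn f 0 p U := by
  rw [Metric.tendstoLocallyUniformlyOn_iff]
  intro ε hε x hx
  obtain ⟨δ, hδ, hδU⟩ := Metric.isOpen_iff.1 hU x hx
  obtain ⟨ρ, hρ, hCρ⟩ := exists_pos_mul_lt (half_pos hε) C
  obtain ⟨t, htK, ht, hcover⟩ :=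
    finite_cover_balls_of_compact (isCompact_closedBall x (δ / 2)) hρ
  have hball : closedBall x (δ / 2) ⊆ ball x δ := closedBall_subset_ball (half_lt_self hδ)
  have hnet : ∀ᶠ i in p, ∀ z ∈ t, ‖f i z‖ < ε / 2 :=
    (eventually_all_finite ht).2 fun z hz =>
      (hpt z (hδU (hball (htK hz)))).norm.eventually
        (gt_mem_nhds (by simpa using half_pos hε))
  refine ⟨closedBall x (δ / 2),
    mem_nhdsWithin_of_mem_nhds (closedBall_mem_nhds x (half_pos hδ)), hnet.mono fun i hi y hy => ?_⟩
  obtain ⟨z, hz, hyz⟩ := mem_iUnion₂.1 (hcover hy)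
  have hlip : ‖f i y - f i z‖ ≤ C * ‖y - z‖ :=
    (convex_ball x δ).norm_image_sub_le_of_norm_fderiv_le (fun w hw => hf i w (hδU hw))
      (fun w hw => hC i w (hδU hw)) (hball (htK hz)) (hball hy)
  have hC0 : 0 ≤ C := (norm_nonneg _).trans (hC i x hx)
  have hCyz : C * ‖y - z‖ ≤ C * ρ :=
    mul_le_mul_of_nonneg_left (mem_ball_iff_norm.1 hyz).le hC0
  calc dist ((0 : E → F) y) (f i y) = ‖(f i y - f i z) + f i z‖ := by simp
    _ ≤ ‖f i y - f i z‖ + ‖f i z‖ := norm_add_le _ _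
    _ < ε := by linarith [hi z hz]

theorem TendstoLocallyUniformlyOn.fderiv_of_norm_fderiv_fderiv_le
    (hlim : TendstoLocallyUniformlyOn f 0 p U) (hU : IsOpen U)
    (hf : ∀ i, ∀ x ∈ U, DifferentiableAt ℝ (f i) x)
    (hf' : ∀ i, ∀ x ∈ U, DifferentiableAt ℝ (fderiv ℝ (f i)) x)
    (hC : ∀ i, ∀ x ∈ U, ‖fderiv ℝ (fderiv ℝ (f i)) x‖ ≤ C) :
    TendstoLocallyUniformlyOn (fun i => fderiv ℝ (f i)) 0 p U := by
  rw [tendstoLocallyUniformlyOn_iff_forall_isCompact hU] at hlim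
  rw [Metric.tendstoLocallyUniformlyOn_iff]
  intro ε hε x hx
  obtain ⟨η, hη, hηU⟩ := Metric.nhds_basis_closedBall.mem_iff.1 (hU.mem_nhds hx)
  have hCh : Tendsto (fun h => C * h) (𝓝[>] 0) (𝓝 0) :=
    ((continuous_const_mul C).tendsto' 0 0 (mul_zero C)).mono_left nhdsWithin_le_nhds
  obtain ⟨h, ⟨hh, hhη⟩, hCh⟩ := (Eventually.and (Ioo_mem_nhdsGT (half_pos hη))
    (hCh.eventually (gt_mem_nhds (half_pos hε)))).exists
  have hunif := Metric.tendstoUniformlyOn_iff.1 (hlim _ hηU (isCompact_closedBall x η))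
    (ε * h / 4) (by positivity)
  refine ⟨ball x (η / 2), mem_nhdsWithin_of_mem_nhds (ball_mem_nhds x (half_pos hη)),
    hunif.mono fun i hi y hy => ?_⟩
  have hyh : closedBall y h ⊆ closedBall x η := closedBall_subset_closedBall' (by
    rw [mem_ball] at hy; linarith)
  have hlandau := norm_fderiv_le_of_norm_le_of_norm_fderiv_fderiv_le hh
    (fun z hz => hf i z (hηU (hyh hz))) (fun z hz => hf' i z (hηU (hyh hz)))
    (fun z hz => by simpa using (hi z (hyh hz)).le)
    (fun z hz => hC i z (hηU (hyh hz)))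
  calc dist ((0 : E → E →L[ℝ] F) y) (fderiv ℝ (f i) y) = ‖fderiv ℝ (f i) y‖ := by simp
    _ ≤ 2 * (ε * h / 4) / h + C * h := hlandau
    _ < ε := by
      rw [show 2 * (ε * h / 4) / h = ε / 2 by field_simp; ring]
      linarith

theorem tendstoLocallyUniformlyOn_iteratedFDeriv_zero (hU : IsOpen U)
    (hf : ∀ i, ContDiff ℝ ∞ (f i)) {B : ℕ → ℝ}
    (hB : ∀ n i, ∀ x ∈ U, ‖iteratedFDeriv ℝ n (f i) x‖ ≤ B n)
    (hpt : ∀ x ∈ U, Tendsto (fun i => f i x) p (𝓝 0)) (n : ℕ) :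
    TendstoLocallyUniformlyOn (fun i => iteratedFDeriv ℝ n (f i)) 0 p U := by
  induction n with
  | zero =>
    refine (tendstoLocallyUniformlyOn_zero_of_norm_fderiv_le (C := B 1) hU
      (fun i x _ => ((hf i).differentiable (by simp)) x) (fun i x hx => ?_)
      hpt).zero_of_norm_le fun i x => (norm_iteratedFDeriv_zero).le
    simpa using hB 1 i x hx
  | succ n ih =>
    have hsmooth : ∀ i, ContDiff ℝ 2 (iteratedFDeriv ℝ n (f i)) :=
      fun i => (hf i).iteratedFDeriv_right (WithTop.coe_le_coe.2 le_top)
    refine (ih.fderiv_of_norm_fderiv_fderiv_le (C := B (n + 2)) hU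
      (fun i x _ => ((hsmooth i).differentiable (by norm_num)) x)
      (fun i x _ =>
        (((hsmooth i).fderiv_right (m := 1) (by norm_num)).differentiable (by norm_num)) x)
      (fun i x hx => ?_)).zero_of_norm_le fun i x => norm_fderiv_iteratedFDeriv.ge
    rw [fderiv_iteratedFDeriv, LinearIsometryEquiv.norm_fderiv_comp, norm_fderiv_iteratedFDeriv]
    exact hB (n + 2) i x hx

end Derivatives

theorem derivatives_tendsto_zero_uniformly_on_compacts_general
    {E : Type*} [NormedAddCommGroup E] [NormedSpace ℝ E] [FiniteDimensional ℝ E]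
    (D : Set E) (hD : IsOpen D)
    (κ : ℝ) (hκ : 0 < κ)
    (T : ℕ → E → ℝ) (hT : ∀ k, ContDiff ℝ (⊤ : ℕ∞) (T k))
    (M : ℝ)
    (hM : ∀ k, ∀ x ∈ D,
      ∑' r : ℕ, ENNReal.ofReal (κ ^ r / r.factorial * ‖iteratedFDeriv ℝ r (T k) x‖) ≤
        ENNReal.ofReal M)
    (hpt : ∀ x ∈ D, Filter.Tendsto (fun k => T k x) Filter.atTop (nhds 0))
    (D' : Set E) (hD'sub : D' ⊆ D) (hD'cpt : IsCompact D') (r : ℕ) :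
    Filter.Tendsto (fun k => ⨆ x ∈ D', ‖iteratedFDeriv ℝ r (T k) x‖)
      Filter.atTop (nhds 0) := by
  have hB : ∀ n k, ∀ x ∈ D,
      ‖iteratedFDeriv ℝ n (T k) x‖ ≤ max M 0 * n.factorial / κ ^ n := fun n k x hx => by
    have := le_max_zero_of_tsum_ofReal_le (hM k x hx) n
    rw [le_div_iff₀ (by positivity)]
    rw [div_mul_eq_mul_div, div_le_iff₀ (by positivity)] at this
    linarith
  have hloc := tendstoLocallyUniformlyOn_iteratedFDeriv_zero hD hT hB hpt r
  exact ((tendstoLocallyUniformlyOn_iff_tendstoUniformlyOn_of_compact hD'cpt).1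
    (hloc.mono hD'sub)).tendsto_iSup_norm_zero

/-- Montel-type convergence of derivatives: if `(T_k)` is a sequence of smooth functions on a
finite-dimensional space whose Taylor seminorms `∑_r (κ^r/r!)‖D^r T_k(x)‖` are uniformly
bounded by `M` on an open set `D`, and `T_k → 0` pointwise on `D`, then for every compact
`D' ⊆ D` and every `r`, `sup_{x ∈ D'} ‖D^r T_k(x)‖ → 0` as `k → ∞`. -/
theorem derivatives_tendsto_zero_uniformly_on_compacts
    {E : Type*} [NormedAddCommGroup E] [NormedSpace ℝ E] [FiniteDimensional ℝ E]
    (D : Set E) (hD : IsOpen D) (hDne : D.Nonempty)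
    (κ : ℝ) (hκ : 0 < κ)
    (T : ℕ → E → ℝ) (hT : ∀ k, ContDiff ℝ (⊤ : ℕ∞) (T k))
    (M : ℝ)
    (hM : ∀ k, ∀ x ∈ D,
      ∑' r : ℕ, ENNReal.ofReal (κ ^ r / r.factorial * ‖iteratedFDeriv ℝ r (T k) x‖) ≤
        ENNReal.ofReal M)
    (hpt : ∀ x ∈ D, Filter.Tendsto (fun k => T k x) Filter.atTop (nhds 0))
    (D' : Set E) (hD'sub : D' ⊆ D) (hD'cpt : IsCompact D') (r : ℕ) :
    Filter.Tendsto (fun k => ⨆ x ∈ D', ‖iteratedFDeriv ℝ r (T k) x‖)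
      Filter.atTop (nhds 0) :=
  derivatives_tendsto_zero_uniformly_on_compacts_general D hD κ hκ T hT M hM hpt D' hD'sub hD'cpt r
end

section
/- Let β be a finite set equipped with a finite simple graph structure, and let R be a commutative ring. For all functions I₁, I₂ : β → R and K : Finset β → R, and every X ⊆ β, one has (I₁ ∘ K)(X) = (I₂ ∘ K')(X), where K' : Finset β → R is defined by K'(W) := ((I₁ − I₂) ∘ K)(W) = ∑_{Y⊆W} (I₁ − I₂)^{W∖Y} · K^{[Y]}; that is, ∑_{Y⊆X} I₁^{X∖Y}·K^{[Y]} = ∑_{W⊆X} I₂^{X∖W} · ∏_{W'∈Comp(W)} K'(W'). -/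
/-- The graph `G` restricted to a finite set `X` of vertices: edges of `G` with both
endpoints in `X` (viewed as a graph on all of `β`). -/
def restrictGraph {β : Type*} (G : SimpleGraph β) (X : Finset β) : SimpleGraph β where
  Adj a b := a ∈ X ∧ b ∈ X ∧ G.Adj a b
  symm := ⟨fun a b h => ⟨h.2.1, h.1, h.2.2.symm⟩⟩
  loopless := ⟨fun a h => G.irrefl h.2.2⟩

/-- The connected component of `x` inside the polymer `X`: all vertices of `X` reachable
from `x` within the subgraph induced on `X`. -/
noncomputable def compOf {β : Type*} (G : SimpleGraph β) (X : Finset β) (x : β) : Finset β :=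
  @Finset.filter β (fun y => (restrictGraph G X).Reachable x y) (Classical.decPred _) X

/-- `Comp(X)`: the set of connected components of the subgraph induced on `X`, each component
regarded as a `Finset β`. -/
noncomputable def comps {β : Type*} [DecidableEq β] (G : SimpleGraph β) (X : Finset β) :
    Finset (Finset β) :=
  X.image (fun x => compOf G X x)

/-- The component power `K^{[X]} = ∏_{P ∈ Comp(X)} K(P)`. -/
noncomputable def compPow {β : Type*} [DecidableEq β] {R : Type*} [CommRing R]
    (G : SimpleGraph β) (K : Finset β → R) (X : Finset β) : R :=
  ∏ P ∈ comps G X, K P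

/-- The polymer expansion `(I ∘ K)(X) = ∑_{Y ⊆ X} I^{X∖Y} K^{[Y]}`, where
`I^{X∖Y} = ∏_{b ∈ X∖Y} I(b)`. -/
noncomputable def polyConv {β : Type*} [DecidableEq β] {R : Type*} [CommRing R]
    (G : SimpleGraph β) (I : β → R) (K : Finset β → R) (X : Finset β) : R :=
  ∑ Y ∈ X.powerset, (∏ b ∈ X \ Y, I b) * compPow G K Y

/-!
Write `J = I₁ - I₂`. Expanding `I₁^{X∖Y} = ∏_{b ∈ X∖Y} (J b + I₂ b)` and reindexing by
`W = Y ∪ S` gives `I₁ ∘ K = I₂ ∘ (J ∘ K)` as an identity of subset convolutions, with no graph in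
sight. It remains to see that `J ∘ K` is its own component power, i.e. that
`∏_{P ∈ Comp(W)} (J ∘ K)(P) = (J ∘ K)(W)`: the polymer expansion factorises over unions of
polymers with no edge between them, and `W` is the disjoint union of its components.
-/

open Finset

section SubsetConvolution

variable {β R : Type*} [DecidableEq β] [CommRing R]

theorem Finset.sum_Icc_eq_sum_powerset_sdiff {Y X : Finset β} (h : Y ⊆ X)
    (g : Finset β → R) : ∑ W ∈ Icc Y X, g W = ∑ S ∈ (X \ Y).powerset, g (Y ∪ S) := by
  rw [Icc_eq_image_powerset h, sum_image]
  intro S₁ hS₁ S₂ hS₂ hS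
  rw [mem_coe, mem_powerset] at hS₁ hS₂
  rw [← union_sdiff_cancel_left (disjoint_of_subset_right hS₁ disjoint_sdiff),
    ← union_sdiff_cancel_left (disjoint_of_subset_right hS₂ disjoint_sdiff)]
  exact congrArg (· \ Y) hS

theorem Finset.sum_powerset_union_of_disjoint {A B : Finset β} (hd : Disjoint A B)
    (F : Finset β → R) :
    ∑ Y ∈ (A ∪ B).powerset, F Y = ∑ Y₁ ∈ A.powerset, ∑ Y₂ ∈ B.powerset, F (Y₁ ∪ Y₂) := by
  rw [powerset_union, ← image_sup_product, sum_image, sum_product]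
  · rfl
  rintro ⟨Y₁, Y₂⟩ hY ⟨Z₁, Z₂⟩ hZ h
  simp only [mem_coe, mem_product, mem_powerset] at hY hZ
  have hA : ∀ {T₁ T₂ : Finset β}, T₁ ⊆ A → T₂ ⊆ B → (T₁ ∪ T₂) ∩ A = T₁ := fun h₁ h₂ => by
    rw [union_inter_distrib_right, inter_eq_left.2 h₁,
      disjoint_iff_inter_eq_empty.1 (disjoint_of_subset_left h₂ hd.symm), union_empty]
  have hB : ∀ {T₁ T₂ : Finset β}, T₁ ⊆ A → T₂ ⊆ B → (T₁ ∪ T₂) ∩ B = T₂ := fun h₁ h₂ => by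
    rw [union_inter_distrib_right, inter_eq_left.2 h₂,
      disjoint_iff_inter_eq_empty.1 (disjoint_of_subset_left h₁ hd), empty_union]
  simp only [Function.uncurry_apply_pair, sup_eq_union] at h
  exact Prod.ext (by simpa only [hA hY.1 hY.2, hA hZ.1 hZ.2] using congrArg (· ∩ A) h)
    (by simpa only [hB hY.1 hY.2, hB hZ.1 hZ.2] using congrArg (· ∩ B) h)

theorem Finset.sum_powerset_prod_sdiff_mul_sum_powerset (I J : β → R) (f : Finset β → R)
    (X : Finset β) :
    ∑ W ∈ X.powerset, (∏ b ∈ X \ W, I b) * ∑ Y ∈ W.powerset, (∏ b ∈ W \ Y, J b) * f Y =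
      ∑ Y ∈ X.powerset, (∏ b ∈ X \ Y, (J b + I b)) * f Y := by
  calc _ = ∑ W ∈ X.powerset, ∑ Y ∈ W.powerset, (∏ b ∈ X \ W, I b) * ((∏ b ∈ W \ Y, J b) * f Y) :=
        by simp_rw [mul_sum]
    _ = ∑ Y ∈ X.powerset, ∑ W ∈ Icc Y X, (∏ b ∈ X \ W, I b) * ((∏ b ∈ W \ Y, J b) * f Y) :=
        sum_comm' fun W Y => by
          simp only [mem_powerset, mem_Icc]
          exact ⟨fun h => ⟨⟨h.2, h.1⟩, h.2.trans h.1⟩, fun h => ⟨h.1.2, h.1.1⟩⟩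
    _ = ∑ Y ∈ X.powerset, ∑ S ∈ (X \ Y).powerset,
          (∏ b ∈ S, J b) * (∏ b ∈ (X \ Y) \ S, I b) * f Y := by
        refine sum_congr rfl fun Y hY => ?_
        rw [sum_Icc_eq_sum_powerset_sdiff (mem_powerset.1 hY)]
        refine sum_congr rfl fun S hS => ?_
        rw [union_sdiff_cancel_left (disjoint_of_subset_right (mem_powerset.1 hS) disjoint_sdiff),
          sdiff_sdiff_left, sup_eq_union]
        ring
    _ = _ := by simp_rw [prod_add, sum_mul]

end SubsetConvolution

section Polymer

variable {β : Type*} (G : SimpleGraph β)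

def IsClosedIn (S A : Finset β) : Prop :=
  ∀ ⦃a b : β⦄, a ∈ A → b ∈ S → G.Adj a b → b ∈ A

variable {G}

theorem mem_compOf {S : Finset β} {x y : β} :
    y ∈ compOf G S x ↔ y ∈ S ∧ (restrictGraph G S).Reachable x y := by
  classical
  unfold compOf
  convert mem_filter

theorem compOf_subset {S : Finset β} {x : β} : compOf G S x ⊆ S :=
  fun _ hy => (mem_compOf.1 hy).1

theorem mem_compOf_self {S : Finset β} {x : β} (hx : x ∈ S) : x ∈ compOf G S x :=
  mem_compOf.2 ⟨hx, .refl x⟩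

theorem restrictGraph_mono {A S : Finset β} (h : A ⊆ S) : restrictGraph G A ≤ restrictGraph G S :=
  fun _ _ hab => ⟨h hab.1, h hab.2.1, hab.2.2⟩

theorem reachable_restrictGraph_of_isClosedIn {S A : Finset β} (hcl : IsClosedIn G S A)
    {x y : β} (hxy : (restrictGraph G S).Reachable x y) (hx : x ∈ A) :
    y ∈ A ∧ (restrictGraph G A).Reachable x y := by
  obtain ⟨w⟩ := hxy
  induction w with
  | nil => exact ⟨hx, .refl _⟩
  | cons h _ ih =>
    have hv := hcl hx h.2.1 h.2.2
    obtain ⟨hy, hr⟩ := ih hv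
    exact ⟨hy, (show (restrictGraph G A).Adj _ _ from ⟨hx, hv, h.2.2⟩).reachable.trans hr⟩

theorem compOf_eq_of_isClosedIn {S A : Finset β} (hAS : A ⊆ S) (hcl : IsClosedIn G S A)
    {y : β} (hy : y ∈ A) : compOf G S y = compOf G A y := by
  ext z
  rw [mem_compOf, mem_compOf]
  exact ⟨fun h => reachable_restrictGraph_of_isClosedIn hcl h.2 hy,
    fun h => ⟨hAS h.1, h.2.mono (restrictGraph_mono hAS)⟩⟩

theorem compOf_isClosedIn {S : Finset β} {x : β} : IsClosedIn G S (compOf G S x) := by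
  intro a b ha hb hab
  rw [mem_compOf] at ha ⊢
  exact ⟨hb, ha.2.trans (SimpleGraph.Adj.reachable ⟨ha.1, hb, hab⟩)⟩

theorem compOf_eq_of_mem {S : Finset β} {x y : β} (hy : y ∈ compOf G S x) :
    compOf G S y = compOf G S x := by
  have hxy := (mem_compOf.1 hy).2
  ext z
  rw [mem_compOf, mem_compOf]
  exact ⟨fun h => ⟨h.1, hxy.trans h.2⟩, fun h => ⟨h.1, hxy.symm.trans h.2⟩⟩

variable [DecidableEq β]

theorem isClosedIn_union_left {A B : Finset β} (hsep : ∀ a ∈ A, ∀ b ∈ B, ¬ G.Adj a b) :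
    IsClosedIn G (A ∪ B) A := fun a b ha hb hab =>
  (mem_union.1 hb).resolve_right fun hbB => hsep a ha b hbB hab

theorem comps_compOf {S : Finset β} {x : β} (hx : x ∈ S) :
    comps G (compOf G S x) = {compOf G S x} := by
  rw [comps, image_congr fun y hy => ?_, image_const ⟨x, mem_compOf_self hx⟩]
  rw [← compOf_eq_of_isClosedIn compOf_subset compOf_isClosedIn hy, compOf_eq_of_mem hy]

theorem comps_union {A B : Finset β} (hsep : ∀ a ∈ A, ∀ b ∈ B, ¬ G.Adj a b) :
    comps G (A ∪ B) = comps G A ∪ comps G B := by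
  have hB : IsClosedIn G (A ∪ B) B := by
    rw [union_comm]
    exact isClosedIn_union_left fun b hb a ha hab => hsep a ha b hb hab.symm
  rw [comps, image_union]
  congr 1 <;> refine image_congr fun x hx => ?_
  · exact compOf_eq_of_isClosedIn subset_union_left (isClosedIn_union_left hsep) hx
  · exact compOf_eq_of_isClosedIn subset_union_right hB hx

theorem disjoint_comps {A B : Finset β} (hd : Disjoint A B) :
    Disjoint (comps G A) (comps G B) := by
  rw [disjoint_left]
  intro P hPA hPB
  obtain ⟨x, hx, rfl⟩ := mem_image.1 hPA
  obtain ⟨y, -, hyx⟩ := mem_image.1 hPB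
  exact disjoint_left.1 hd hx (compOf_subset (hyx ▸ mem_compOf_self hx))

variable {R : Type*} [CommRing R]

theorem compPow_union (K : Finset β → R) {A B : Finset β} (hd : Disjoint A B)
    (hsep : ∀ a ∈ A, ∀ b ∈ B, ¬ G.Adj a b) :
    compPow G K (A ∪ B) = compPow G K A * compPow G K B := by
  rw [compPow, comps_union hsep, prod_union (disjoint_comps hd), compPow, compPow]

theorem polyConv_union (J : β → R) (K : Finset β → R) {A B : Finset β} (hd : Disjoint A B)
    (hsep : ∀ a ∈ A, ∀ b ∈ B, ¬ G.Adj a b) :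
    polyConv G J K (A ∪ B) = polyConv G J K A * polyConv G J K B := by
  rw [polyConv, polyConv, polyConv, sum_powerset_union_of_disjoint hd, sum_mul_sum]
  refine sum_congr rfl fun Y₁ hY₁ => sum_congr rfl fun Y₂ hY₂ => ?_
  rw [mem_powerset] at hY₁ hY₂
  have hsd : (A ∪ B) \ (Y₁ ∪ Y₂) = (A \ Y₁) ∪ (B \ Y₂) := by
    ext z
    have hAB : z ∈ A → z ∉ B := fun h => disjoint_left.1 hd h
    have h₁ : z ∈ Y₁ → z ∈ A := fun h => hY₁ h
    have h₂ : z ∈ Y₂ → z ∈ B := fun h => hY₂ h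
    simp only [mem_sdiff, mem_union]
    tauto
  rw [hsd,
    prod_union (disjoint_of_subset_left sdiff_subset (disjoint_of_subset_right sdiff_subset hd)),
    compPow_union K (disjoint_of_subset_left hY₁ (disjoint_of_subset_right hY₂ hd))
      fun a ha b hb => hsep a (hY₁ ha) b (hY₂ hb)]
  ring

theorem compPow_polyConv (J : β → R) (K : Finset β → R) (W : Finset β) :
    compPow G (polyConv G J K) W = polyConv G J K W := by
  induction W using Finset.strongInduction with
  | _ W ih =>
    rcases W.eq_empty_or_nonempty with rfl | ⟨x, hx⟩
    · simp [compPow, comps, polyConv]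
    set A := compOf G W x
    have hsep : ∀ a ∈ A, ∀ b ∈ W \ A, ¬ G.Adj a b := fun a ha b hb hab =>
      (mem_sdiff.1 hb).2 (compOf_isClosedIn ha (mem_sdiff.1 hb).1 hab)
    have hW : A ∪ (W \ A) = W := union_sdiff_of_subset compOf_subset
    have hrest : W \ A ⊂ W := sdiff_ssubset compOf_subset ⟨x, mem_compOf_self hx⟩
    rw [← hW, compPow_union _ disjoint_sdiff hsep, polyConv_union J K disjoint_sdiff hsep,
      ih _ hrest, compPow, comps_compOf hx, prod_singleton]

end Polymer

theorem polyConv_change_of_I_general {β : Type*} [DecidableEq β] (G : SimpleGraph β)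
    {R : Type*} [CommRing R] (I₁ I₂ : β → R) (K : Finset β → R) (X : Finset β) :
    polyConv G I₁ K X =
      polyConv G I₂ (fun W => polyConv G (fun b => I₁ b - I₂ b) K W) X := by
  set J : β → R := fun b => I₁ b - I₂ b
  symm
  calc polyConv G I₂ (polyConv G J K) X
      = ∑ W ∈ X.powerset, (∏ b ∈ X \ W, I₂ b) * polyConv G J K W :=
        sum_congr rfl fun W _ => by rw [compPow_polyConv]
    _ = ∑ Y ∈ X.powerset, (∏ b ∈ X \ Y, (J b + I₂ b)) * compPow G K Y :=
        sum_powerset_prod_sdiff_mul_sum_powerset I₂ J (compPow G K) X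
    _ = polyConv G I₁ K X := by simp only [J, sub_add_cancel]; rfl

/-- The re-expansion identity `I₁ ∘ K = I₂ ∘ ((I₁ - I₂) ∘ K)` for polymer expansions:
`∑_{Y⊆X} I₁^{X∖Y} K^{[Y]} = ∑_{W⊆X} I₂^{X∖W} ∏_{W'∈Comp(W)} ((I₁-I₂) ∘ K)(W')`. -/
theorem polyConv_change_of_I {β : Type*} [Fintype β] [DecidableEq β] (G : SimpleGraph β)
    {R : Type*} [CommRing R] (I₁ I₂ : β → R) (K : Finset β → R) (X : Finset β) :
    polyConv G I₁ K X =
      polyConv G I₂ (fun W => polyConv G (fun b => I₁ b - I₂ b) K W) X :=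
  polyConv_change_of_I_general G I₁ I₂ K X
end
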